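/- arXiv:math/9912220 — 5 statements merged into one kernel-verified Lean document; each statement's English description precedes it below -/
import Mathlib

section
/- Under the smallness conditions v < 1 and v·‖Ã‖ < d₀(1−v)²/4, let X be the solution of X = V(Ã+X) with ‖X‖ ≤ r_min and put H := Ã + X. Then for every z ∈ ℂ with essinf_ω |z − ζ(ω)| > 0, the transfer function admits the factorization M(z) = W(z) ∘ (H − z·I), where W(z) := I − ∫ K(ω)∘(H−ζ(ω))⁻¹ dμ(ω) + z·∫ (z−ζ(ω))⁻¹ · (K(ω)∘(H−ζ(ω))⁻¹) dμ(ω) is a bounded operator on H₁ (all the Bochner integrals converging). -/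
open MeasureTheory ContinuousLinearMap

/-- `X` solves the basic equation `X = V₁(Ã + X, Γ)` (with the Bochner integral
well defined). -/
def IsSolution {H : Type*} [NormedAddCommGroup H] [NormedSpace ℂ H] [CompleteSpace H]
    {Ω : Type*} [MeasurableSpace Ω] (μ : Measure Ω)
    (ζ : Ω → ℂ) (K : Ω → H →L[ℂ] H) (A X : H →L[ℂ] H) : Prop :=
  (∀ᵐ ω ∂μ, IsUnit (A + X - ζ ω • (1 : H →L[ℂ] H))) ∧
  Integrable (fun ω =>
    K ω ∘L ((A + X) ∘L Ring.inverse (A + X - ζ ω • (1 : H →L[ℂ] H)))) μ ∧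
  X = ∫ ω, K ω ∘L ((A + X) ∘L Ring.inverse (A + X - ζ ω • (1 : H →L[ℂ] H))) ∂μ

/-- The analytically continued transfer function
`M(z) = Ã - z + ∫ z/(z-ζ(ω)) K(ω) dμ(ω)`. -/
noncomputable def Mtr {H : Type*} [NormedAddCommGroup H] [NormedSpace ℂ H] [CompleteSpace H]
    {Ω : Type*} [MeasurableSpace Ω] (μ : Measure Ω)
    (ζ : Ω → ℂ) (K : Ω → H →L[ℂ] H) (A : H →L[ℂ] H) (z : ℂ) : H →L[ℂ] H :=
  A - z • (1 : H →L[ℂ] H) + ∫ ω, (z / (z - ζ ω)) • K ω ∂μ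

/-- The factor `W(z)` of the factorization theorem (4.2). -/
noncomputable def Wfac {H : Type*} [NormedAddCommGroup H] [NormedSpace ℂ H] [CompleteSpace H]
    {Ω : Type*} [MeasurableSpace Ω] (μ : Measure Ω)
    (ζ : Ω → ℂ) (K : Ω → H →L[ℂ] H) (Hop : H →L[ℂ] H) (z : ℂ) : H →L[ℂ] H :=
  (1 : H →L[ℂ] H)
    - (∫ ω, K ω ∘L Ring.inverse (Hop - ζ ω • (1 : H →L[ℂ] H)) ∂μ)
    + z • ∫ ω, (z - ζ ω)⁻¹ • (K ω ∘L Ring.inverse (Hop - ζ ω • (1 : H →L[ℂ] H))) ∂μ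

/-!
Since `Ã` is self-adjoint, `‖(Ã - ζ)⁻¹‖ ≤ 1 / d₀` on the contour; as `‖X‖ ≤ r_min ≤ d₀ / 2`, the
resolvent identity `(H - ζ)⁻¹ = (Ã - ζ)⁻¹ - (Ã - ζ)⁻¹ X (H - ζ)⁻¹` then gives
`‖(H - ζ)⁻¹‖ ≤ 2 / d₀`, so every integrand is dominated by a multiple of `‖K‖`.
The factorization itself is pointwise algebra: with `R = (H - ζ)⁻¹` one has
`K R (H - z) = K - (z - ζ) K R` and `K H R = K + ζ K R`, and integrating these against
`X = ∫ K H R` turns `W(z) (H - z)` into `M(z)`.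
-/

section Resolvent

variable {R A : Type*} [CommRing R] [Ring A] [Algebra R A] {h : A} {c : R}

theorem mul_inverse_sub_smul_one_mul (k : A) (hu : IsUnit (h - c • 1)) (z : R) :
    k * Ring.inverse (h - c • 1) * (h - z • 1) = k - (z - c) • (k * Ring.inverse (h - c • 1)) := by
  have : h - z • (1 : A) = (h - c • 1) - (z - c) • 1 := by rw [sub_smul]; abel
  rw [this, mul_sub, mul_assoc, Ring.inverse_mul_cancel _ hu, mul_one, mul_smul_comm, mul_one]

theorem mul_mul_inverse_sub_smul_one (k : A) (hu : IsUnit (h - c • 1)) :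
    k * (h * Ring.inverse (h - c • 1)) = k + c • (k * Ring.inverse (h - c • 1)) := by
  have hr := Ring.mul_inverse_cancel _ hu
  rw [sub_mul, smul_one_mul, sub_eq_iff_eq_add'] at hr
  rw [hr, mul_add, mul_one, mul_smul_comm, add_comm]

end Resolvent

theorem norm_inverse_add_le_two_mul {R : Type*} [NormedRing R] {b x : R} (hb : IsUnit b)
    (hbx : IsUnit (b + x)) (hsmall : ‖Ring.inverse b‖ * ‖x‖ ≤ 1 / 2) :
    ‖Ring.inverse (b + x)‖ ≤ 2 * ‖Ring.inverse b‖ := by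
  set p := Ring.inverse b
  set r := Ring.inverse (b + x)
  have hr : r = p - p * x * r := by
    have : p * (b + x) * r = p := by rw [mul_assoc, Ring.mul_inverse_cancel _ hbx, mul_one]
    rw [mul_add, Ring.inverse_mul_cancel _ hb, add_mul, one_mul] at this
    exact eq_sub_of_add_eq this
  have hr_le : ‖r‖ ≤ ‖p‖ + ‖p‖ * ‖x‖ * ‖r‖ :=
    calc ‖r‖ = ‖p - p * x * r‖ := congrArg _ hr
      _ ≤ ‖p‖ + ‖p * x * r‖ := norm_sub_le _ _
      _ ≤ ‖p‖ + ‖p‖ * ‖x‖ * ‖r‖ := by gcongr; exact norm_mul₃_le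
  nlinarith [norm_nonneg r]

theorem IsStarNormal.norm_inverse_sub_smul_one_le {A : Type*} [CStarAlgebra A] {a : A}
    [IsStarNormal a] {c : ℂ} (hc : c ∉ spectrum ℂ a) :
    ‖Ring.inverse (a - c • 1)‖ ≤ (Metric.infDist c (spectrum ℂ a))⁻¹ := by
  have hsub : a - c • 1 = cfc (fun x : ℂ => x - c) a := by
    rw [cfc_sub .., cfc_id' .., cfc_const .., Algebra.algebraMap_eq_smul_one]
  have hne : ∀ x ∈ spectrum ℂ a, x - c ≠ 0 := fun x hx h => hc (sub_eq_zero.mp h ▸ hx)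
  rw [hsub, ← cfc_inv _ a hne]
  refine norm_cfc_le (inv_nonneg.mpr Metric.infDist_nonneg) fun x hx => ?_
  have hpos : 0 < Metric.infDist c (spectrum ℂ a) :=
    ((spectrum.isClosed a).notMem_iff_infDist_pos ⟨x, hx⟩).mp hc
  rw [norm_inv, ← dist_eq_norm, dist_comm]
  exact inv_anti₀ hpos (Metric.infDist_le_dist_of_mem hx)

theorem IsStarNormal.norm_inverse_add_sub_smul_one_le {A : Type*} [CStarAlgebra A] {a x : A}
    [IsStarNormal a] {c : ℂ} {d : ℝ} (hd : 0 < d) (hdist : d ≤ Metric.infDist c (spectrum ℂ a))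
    (hx : ‖x‖ ≤ d / 2) (hu : IsUnit (a + x - c • 1)) :
    ‖Ring.inverse (a + x - c • 1)‖ ≤ 2 / d := by
  have hc : c ∉ spectrum ℂ a := fun hc => by
    rw [Metric.infDist_zero_of_mem hc] at hdist
    exact hdist.not_gt hd
  have hb : IsUnit (a - c • 1) := by
    simpa [Algebra.algebraMap_eq_smul_one] using (spectrum.notMem_iff.mp hc).neg
  have hp : ‖Ring.inverse (a - c • 1)‖ ≤ d⁻¹ :=
    (norm_inverse_sub_smul_one_le hc).trans (inv_anti₀ hd hdist)
  rw [add_sub_right_comm] at hu ⊢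
  calc ‖Ring.inverse (a - c • 1 + x)‖ ≤ 2 * ‖Ring.inverse (a - c • 1)‖ := by
        refine norm_inverse_add_le_two_mul hb hu ?_
        calc ‖Ring.inverse (a - c • 1)‖ * ‖x‖ ≤ d⁻¹ * (d / 2) := by gcongr
          _ = 1 / 2 := by field_simp
    _ ≤ 2 / d := by rw [div_eq_mul_inv]; gcongr

theorem Continuous.aestronglyMeasurable_ringInverse_comp {Ω α R : Type*} [MeasurableSpace Ω]
    {μ : Measure Ω} [TopologicalSpace α] [SecondCountableTopology α] [MeasurableSpace α]
    [OpensMeasurableSpace α] [NormedRing R] [HasSummableGeomSeries R] {g : α → R}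
    (hg : Continuous g) {ζ : Ω → α} (hζ : AEMeasurable ζ μ) (hunit : ∀ᵐ ω ∂μ, IsUnit (g (ζ ω))) :
    AEStronglyMeasurable (fun ω => Ring.inverse (g (ζ ω))) μ := by
  set U := g ⁻¹' {x | IsUnit x}
  have hU : IsOpen U := Units.isOpen.preimage hg
  have hcont : ContinuousOn (fun c => Ring.inverse (g c)) U := fun c hc =>
    ((NormedRing.inverse_continuousAt hc.unit).comp_of_eq hg.continuousAt
      hc.unit_spec.symm).continuousWithinAt
  have hmap : ∀ᵐ c ∂μ.map ζ, c ∈ U := (ae_map_iff hζ hU.measurableSet).2 hunit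
  have := hcont.aestronglyMeasurable (μ := μ.map ζ) hU.measurableSet
  rw [Measure.restrict_eq_self_of_ae_mem hmap] at this
  exact this.comp_aemeasurable hζ

theorem MeasureTheory.Integrable.inv_sub_smul {Ω E : Type*} [MeasurableSpace Ω] {μ : Measure Ω}
    [NormedAddCommGroup E] [NormedSpace ℂ E] {f : Ω → E} (hf : Integrable f μ) {ζ : Ω → ℂ}
    (hζ : AEMeasurable ζ μ) {z : ℂ} {ε : ℝ} (hε : 0 < ε) (hzε : ∀ᵐ ω ∂μ, ε ≤ ‖z - ζ ω‖) :
    Integrable (fun ω => (z - ζ ω)⁻¹ • f ω) μ := by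
  refine hf.bdd_smul ε⁻¹ (aemeasurable_const.sub hζ).inv.aestronglyMeasurable ?_
  filter_upwards [hzε] with ω hω
  rw [norm_inv]
  exact inv_anti₀ hε hω

section Factorization

variable {𝔸 Ω : Type*} [NormedRing 𝔸] [NormedAlgebra ℂ 𝔸] [MeasurableSpace Ω] {μ : Measure Ω}

theorem factorization_of_integrable {ζ : Ω → ℂ} {K : Ω → 𝔸} {h : 𝔸} {z : ℂ}
    (hunit : ∀ᵐ ω ∂μ, IsUnit (h - ζ ω • 1)) (hz : ∀ᵐ ω ∂μ, z - ζ ω ≠ 0)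
    (hKz : Integrable (fun ω => (z / (z - ζ ω)) • K ω) μ)
    (hKhR : Integrable (fun ω => K ω * (h * Ring.inverse (h - ζ ω • 1))) μ)
    (hKR : Integrable (fun ω => K ω * Ring.inverse (h - ζ ω • 1)) μ)
    (hKRz : Integrable (fun ω => (z - ζ ω)⁻¹ • (K ω * Ring.inverse (h - ζ ω • 1))) μ) :
    h - z • 1 - ∫ ω, K ω * (h * Ring.inverse (h - ζ ω • 1)) ∂μ
        + ∫ ω, (z / (z - ζ ω)) • K ω ∂μ
      = (1 - ∫ ω, K ω * Ring.inverse (h - ζ ω • 1) ∂μ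
          + z • ∫ ω, (z - ζ ω)⁻¹ • (K ω * Ring.inverse (h - ζ ω • 1)) ∂μ) * (h - z • 1) := by
  set T := h - z • (1 : 𝔸)
  have hzero : ∀ᵐ ω ∂μ, (z / (z - ζ ω)) • K ω - K ω * (h * Ring.inverse (h - ζ ω • 1))
      + K ω * Ring.inverse (h - ζ ω • 1) * T
      - z • ((z - ζ ω)⁻¹ • (K ω * Ring.inverse (h - ζ ω • 1)) * T) = 0 := by
    filter_upwards [hunit, hz] with ω hu hw
    rw [smul_mul_assoc, mul_inverse_sub_smul_one_mul _ hu, mul_mul_inverse_sub_smul_one _ hu]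
    match_scalars <;> field_simp <;> ring
  have hint := integral_congr_ae hzero
  rw [integral_zero, integral_sub, integral_add, integral_sub hKz hKhR, integral_smul,
    integral_mul_const_of_integrable hKR, integral_mul_const_of_integrable hKRz] at hint
  · rw [← sub_eq_zero, ← hint]
    noncomm_ring
  · exact hKz.sub hKhR
  · exact hKR.mul_const T
  · exact (hKz.sub hKhR).add (hKR.mul_const T)
  · exact (hKRz.mul_const T).smul z

end Factorization

theorem transfer_function_factorization_general
    {H : Type*} [NormedAddCommGroup H] [InnerProductSpace ℂ H] [CompleteSpace H]
    {Ω : Type*} [MeasurableSpace Ω] (μ : Measure Ω)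
    (ζ : Ω → ℂ) (hζ : Measurable ζ)
    (K : Ω → H →L[ℂ] H) (hK : Integrable K μ)
    (A : H →L[ℂ] H) (hA : IsSelfAdjoint A)
    (d₀ : ℝ) (hd₀ : 0 < d₀)
    (hdist : ∀ᵐ ω ∂μ, d₀ ≤ Metric.infDist (ζ ω) (spectrum ℂ A))
    (v : ℝ) (hv : v = ∫ ω, ‖K ω‖ / Metric.infDist (ζ ω) (spectrum ℂ A) ∂μ)
    (X : H →L[ℂ] H)
    (hXnorm : ‖X‖ ≤ d₀ * (1 - v) / 2 -
      Real.sqrt (d₀ ^ 2 * (1 - v) ^ 2 / 4 - d₀ * v * ‖A‖))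
    (hXsol : IsSolution μ ζ K A X)
    (z : ℂ) (hz : ∃ ε > (0 : ℝ), ∀ᵐ ω ∂μ, ε ≤ ‖z - ζ ω‖) :
    Integrable (fun ω => (z / (z - ζ ω)) • K ω) μ ∧
    Integrable (fun ω =>
      K ω ∘L Ring.inverse (A + X - ζ ω • (1 : H →L[ℂ] H))) μ ∧
    Integrable (fun ω =>
      (z - ζ ω)⁻¹ • (K ω ∘L Ring.inverse (A + X - ζ ω • (1 : H →L[ℂ] H)))) μ ∧
    Mtr μ ζ K A z = Wfac μ ζ K (A + X) z ∘L (A + X - z • (1 : H →L[ℂ] H)) := by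
  obtain ⟨hunit, hKhR, hXeq⟩ := hXsol
  simp only [← mul_def] at hKhR hXeq
  obtain ⟨ε, hε, hzε⟩ := hz
  have := hA.isStarNormal
  have hv0 : 0 ≤ v :=
    hv ▸ integral_nonneg fun ω => div_nonneg (norm_nonneg _) Metric.infDist_nonneg
  have hX : ‖X‖ ≤ d₀ / 2 := by
    nlinarith [Real.sqrt_nonneg (d₀ ^ 2 * (1 - v) ^ 2 / 4 - d₀ * v * ‖A‖)]
  have hR : ∀ᵐ ω ∂μ, ‖Ring.inverse (A + X - ζ ω • (1 : H →L[ℂ] H))‖ ≤ 2 / d₀ := by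
    filter_upwards [hunit, hdist] with ω hu hd
    exact IsStarNormal.norm_inverse_add_sub_smul_one_le hd₀ hd hX hu
  have hRm : AEStronglyMeasurable (fun ω => Ring.inverse (A + X - ζ ω • (1 : H →L[ℂ] H))) μ :=
    (show Continuous fun c : ℂ => A + X - c • (1 : H →L[ℂ] H) by fun_prop)
      |>.aestronglyMeasurable_ringInverse_comp hζ.aemeasurable hunit
  have hKR : Integrable (fun ω => K ω * Ring.inverse (A + X - ζ ω • (1 : H →L[ℂ] H))) μ :=
    hK.mul_bdd hRm hR
  have hKRz := hKR.inv_sub_smul hζ.aemeasurable hε hzε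
  have hKz : Integrable (fun ω => (z / (z - ζ ω)) • K ω) μ := by
    simpa only [div_eq_mul_inv, mul_smul] using (hK.inv_sub_smul hζ.aemeasurable hε hzε).fun_smul z
  have hzζ : ∀ᵐ ω ∂μ, z - ζ ω ≠ 0 := hzε.mono fun ω h => norm_pos_iff.mp (hε.trans_le h)
  refine ⟨hKz, hKR, hKRz, ?_⟩
  have key := factorization_of_integrable hunit hzζ hKz hKhR hKR hKRz
  rw [← hXeq, sub_right_comm, add_sub_cancel_right] at key
  exact key

/-- Theorem 4.1 (`factorization`), formulas (4.1)–(4.2): for every `z` with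
`essinf |z - ζ(ω)| > 0` the transfer function factorizes as
`M(z) = W(z)(H - z)` with `H = Ã + X`, all Bochner integrals converging. -/
theorem transfer_function_factorization
    {H : Type*} [NormedAddCommGroup H] [InnerProductSpace ℂ H] [CompleteSpace H]
    {Ω : Type*} [MeasurableSpace Ω] (μ : Measure Ω)
    (ζ : Ω → ℂ) (hζ : Measurable ζ)
    (K : Ω → H →L[ℂ] H) (hK : Integrable K μ)
    (A : H →L[ℂ] H) (hA : IsSelfAdjoint A)
    (d₀ : ℝ) (hd₀ : 0 < d₀)
    (hdist : ∀ᵐ ω ∂μ, d₀ ≤ Metric.infDist (ζ ω) (spectrum ℂ A))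
    (hvInt : Integrable (fun ω => ‖K ω‖ / Metric.infDist (ζ ω) (spectrum ℂ A)) μ)
    (v : ℝ) (hv : v = ∫ ω, ‖K ω‖ / Metric.infDist (ζ ω) (spectrum ℂ A) ∂μ)
    (hv1 : v < 1) (hv2 : v * ‖A‖ < d₀ * (1 - v) ^ 2 / 4)
    (X : H →L[ℂ] H)
    (hXnorm : ‖X‖ ≤ d₀ * (1 - v) / 2 -
      Real.sqrt (d₀ ^ 2 * (1 - v) ^ 2 / 4 - d₀ * v * ‖A‖))
    (hXsol : IsSolution μ ζ K A X)
    (z : ℂ) (hz : ∃ ε > (0 : ℝ), ∀ᵐ ω ∂μ, ε ≤ ‖z - ζ ω‖) :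
    Integrable (fun ω => (z / (z - ζ ω)) • K ω) μ ∧
    Integrable (fun ω =>
      K ω ∘L Ring.inverse (A + X - ζ ω • (1 : H →L[ℂ] H))) μ ∧
    Integrable (fun ω =>
      (z - ζ ω)⁻¹ • (K ω ∘L Ring.inverse (A + X - ζ ω • (1 : H →L[ℂ] H)))) μ ∧
    Mtr μ ζ K A z = Wfac μ ζ K (A + X) z ∘L (A + X - z • (1 : H →L[ℂ] H)) :=
  transfer_function_factorization_general μ ζ hζ K hK A hA d₀ hd₀ hdist v hv X hXnorm hXsol z hz
end

section
/- Under the smallness conditions v < 1 and v·‖Ã‖ < d₀(1−v)²/4, let X be the solution of X = V(Ã+X) with ‖X‖ ≤ r_min and H := Ã + X. Then the Bochner integral ∫ K(ω)∘(H−ζ(ω))⁻¹ dμ(ω) exists and its operator norm is at most 2v/(1+v). -/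
open MeasureTheory ContinuousLinearMap

section Auxiliary

open Metric ENNReal NNReal

lemma aux_geom {R : Type*} [NormedRing R] [CompleteSpace R] (h1 : ‖(1:R)‖ ≤ 1) {x : R}
    (h : ‖x‖ < 1) : ‖Ring.inverse (1 - x)‖ ≤ (1 - ‖x‖)⁻¹ := by
  rw [← geom_series_eq_inverse x h]
  have hs : Summable fun i : ℕ => ‖x‖ ^ i := summable_geometric_of_lt_one (norm_nonneg _) h
  have hle : ∀ i : ℕ, ‖x ^ i‖ ≤ ‖x‖ ^ i := by
    intro i
    cases i with
    | zero => simpa using h1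
    | succ n => exact norm_pow_le' x n.succ_pos
  have hs' : Summable fun i : ℕ => ‖x ^ i‖ :=
    hs.of_nonneg_of_le (fun _ => norm_nonneg _) hle
  calc ‖∑' i : ℕ, x ^ i‖ ≤ ∑' i : ℕ, ‖x ^ i‖ := norm_tsum_le_tsum_norm hs'
    _ ≤ ∑' i : ℕ, ‖x‖ ^ i := Summable.tsum_le_tsum hle hs' hs
    _ = (1 - ‖x‖)⁻¹ := tsum_geometric_of_lt_one (norm_nonneg _) h


lemma sa_resolvent {A' : Type*} [CStarAlgebra A'] {a : A'} (ha : IsSelfAdjoint a) {z : ℂ}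
    (hz : 0 < infDist z (spectrum ℂ a)) :
    IsUnit (a - z • 1) ∧ ‖Ring.inverse (a - z • 1)‖ ≤ (infDist z (spectrum ℂ a))⁻¹ := by
  set d := infDist z (spectrum ℂ a) with hd
  have hzσ : z ∉ spectrum ℂ a := fun h => hz.ne' (infDist_zero_of_mem h)
  have hu0 : IsUnit (algebraMap ℂ A' z - a) := spectrum.notMem_iff.mp hzσ
  have halg : algebraMap ℂ A' z = z • 1 := Algebra.algebraMap_eq_smul_one z
  have hu : IsUnit (a - z • 1) := by
    rw [halg] at hu0
    simpa [neg_sub] using hu0.neg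
  refine ⟨hu, ?_⟩
  obtain ⟨u, hu_eq⟩ := hu
  have hcomm : Commute (star (a - z • 1)) (a - z • 1) := by
    rw [star_sub, star_smul, star_one, ha.star_eq]
    exact Commute.sub_left
      ((Commute.refl a).sub_right ((Commute.one_right a).smul_right z))
      (((Commute.one_left a).smul_left _).sub_right
        (((Commute.refl (1:A')).smul_left _).smul_right z))
  rw [← hu_eq] at hcomm ⊢
  rw [Ring.inverse_unit]
  have c1 : Commute (star (u:A')) ((u⁻¹ : A'ˣ) : A') := hcomm.units_inv_right
  have c2 : Commute (star ((u⁻¹ : A'ˣ) : A')) ((u⁻¹ : A'ˣ) : A') := by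
    have := c1.star_star
    rw [star_star] at this
    exact this.symm.units_inv_right
  have : IsStarNormal ((u⁻¹ : A'ˣ) : A') := ⟨c2⟩
  have hrad : spectralRadius ℂ ((u⁻¹ : A'ˣ) : A') = ‖((u⁻¹ : A'ˣ) : A')‖₊ :=
    IsStarNormal.spectralRadius_eq_nnnorm _
  have hbound : spectralRadius ℂ ((u⁻¹ : A'ˣ) : A') ≤ ENNReal.ofReal d⁻¹ := by
    rw [spectralRadius]
    refine iSup₂_le fun k hk => ?_
    rw [← spectrum.map_inv, Set.mem_inv] at hk
    rw [hu_eq] at hk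
    rw [← halg, ← spectrum.sub_singleton_eq] at hk
    rw [Set.mem_sub] at hk
    obtain ⟨x, hx, y, hy, hxy⟩ := hk
    rw [Set.mem_singleton_iff] at hy
    subst hy
    have hdk : d ≤ ‖k⁻¹‖ := by
      rw [← hxy, norm_sub_rev, ← dist_eq_norm]
      exact infDist_le_dist_of_mem hx
    have hk0 : k ≠ 0 := by
      intro h
      simp [h] at hdk
      exact absurd hdk (not_le.mpr hz)
    have : ‖k‖ ≤ d⁻¹ := by
      rw [← inv_inv (‖k‖), ← norm_inv]
      exact inv_anti₀ hz hdk
    calc (‖k‖₊ : ℝ≥0∞) = ENNReal.ofReal ‖k‖ := (ofReal_norm k).symm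
      _ ≤ ENNReal.ofReal d⁻¹ := ENNReal.ofReal_le_ofReal this
  rw [hrad] at hbound
  rw [← ENNReal.ofReal_le_ofReal_iff (by positivity), ofReal_norm]
  exact hbound

lemma pert_resolvent {Hs : Type*} [NormedAddCommGroup Hs] [InnerProductSpace ℂ Hs]
    [CompleteSpace Hs] {A X : Hs →L[ℂ] Hs} (hA : IsSelfAdjoint A) {z : ℂ}
    (hX : ‖X‖ < infDist z (spectrum ℂ A)) :
    ‖Ring.inverse (A + X - z • 1)‖ ≤ (infDist z (spectrum ℂ A) - ‖X‖)⁻¹ := by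
  set d := infDist z (spectrum ℂ A) with hd_def
  have hd : 0 < d := (norm_nonneg X).trans_lt hX
  obtain ⟨hu, hinv⟩ := sa_resolvent hA hd
  set Ra := Ring.inverse (A - z • (1 : Hs →L[ℂ] Hs)) with hRa
  set t : Hs →L[ℂ] Hs := -(Ra * X) with ht_def
  have htnorm : ‖t‖ ≤ d⁻¹ * ‖X‖ := by
    rw [ht_def, norm_neg]
    exact (norm_mul_le _ _).trans (mul_le_mul_of_nonneg_right hinv (norm_nonneg X))
  have hdX : d⁻¹ * ‖X‖ < 1 := by
    rw [inv_mul_lt_iff₀ hd, mul_one]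
    exact hX
  have ht : ‖t‖ < 1 := htnorm.trans_lt hdX
  obtain ⟨u, hu_eq⟩ := hu
  have hfact : A + X - z • (1 : Hs →L[ℂ] Hs) = ↑(u * Units.oneSub t ht) := by
    have h1 : (A - z • (1 : Hs →L[ℂ] Hs)) * Ra = 1 := Ring.mul_inverse_cancel _ ⟨u, hu_eq⟩
    push_cast [Units.val_oneSub, hu_eq]
    rw [ht_def, sub_neg_eq_add, mul_add, mul_one, ← mul_assoc, h1, one_mul]
    abel
  rw [hfact, Ring.inverse_unit, mul_inv_rev, Units.val_mul]
  have hgeom : ‖((Units.oneSub t ht)⁻¹ : (Hs →L[ℂ] Hs)ˣ).val‖ ≤ (1 - ‖t‖)⁻¹ := by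
    have := aux_geom (R := Hs →L[ℂ] Hs) (by
      rw [ContinuousLinearMap.one_def]; exact ContinuousLinearMap.norm_id_le) ht
    rwa [NormedRing.inverse_one_sub t ht] at this
  have huinv : ‖((u⁻¹ : (Hs →L[ℂ] Hs)ˣ) : Hs →L[ℂ] Hs)‖ ≤ d⁻¹ := by
    rw [hRa, ← hu_eq, Ring.inverse_unit] at hinv
    exact hinv
  refine (norm_mul_le _ _).trans ?_
  refine (mul_le_mul hgeom huinv (norm_nonneg _) (inv_nonneg.mpr (by linarith))).trans ?_
  have h2 : (1 - ‖t‖)⁻¹ ≤ (1 - d⁻¹ * ‖X‖)⁻¹ := inv_anti₀ (by linarith) (by linarith)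
  calc (1 - ‖t‖)⁻¹ * d⁻¹ ≤ (1 - d⁻¹ * ‖X‖)⁻¹ * d⁻¹ :=
        mul_le_mul_of_nonneg_right h2 (by positivity)
    _ = (d - ‖X‖)⁻¹ := by
        rw [← mul_inv]
        congr 1
        field_simp

end Auxiliary

/-- Estimate (4.7) (`Est00`) from the proof of the factorization theorem:
`‖∫ K(ω)(H - ζ(ω))⁻¹ dμ(ω)‖ ≤ 2v/(1+v)` where `H = Ã + X`. -/
theorem Est00
    {H : Type*} [NormedAddCommGroup H] [InnerProductSpace ℂ H] [CompleteSpace H]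
    {Ω : Type*} [MeasurableSpace Ω] (μ : Measure Ω)
    (ζ : Ω → ℂ) (hζ : Measurable ζ)
    (K : Ω → H →L[ℂ] H) (hK : Integrable K μ)
    (A : H →L[ℂ] H) (hA : IsSelfAdjoint A)
    (d₀ : ℝ) (hd₀ : 0 < d₀)
    (hdist : ∀ᵐ ω ∂μ, d₀ ≤ Metric.infDist (ζ ω) (spectrum ℂ A))
    (hvInt : Integrable (fun ω => ‖K ω‖ / Metric.infDist (ζ ω) (spectrum ℂ A)) μ)
    (v : ℝ) (hv : v = ∫ ω, ‖K ω‖ / Metric.infDist (ζ ω) (spectrum ℂ A) ∂μ)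
    (hv1 : v < 1) (hv2 : v * ‖A‖ < d₀ * (1 - v) ^ 2 / 4)
    (X : H →L[ℂ] H)
    (hXnorm : ‖X‖ ≤ d₀ * (1 - v) / 2 -
      Real.sqrt (d₀ ^ 2 * (1 - v) ^ 2 / 4 - d₀ * v * ‖A‖))
    (hXsol : IsSolution μ ζ K A X) :
    Integrable (fun ω =>
      K ω ∘L Ring.inverse (A + X - ζ ω • (1 : H →L[ℂ] H))) μ ∧
    ‖∫ ω, K ω ∘L Ring.inverse (A + X - ζ ω • (1 : H →L[ℂ] H)) ∂μ‖ ≤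
      2 * v / (1 + v) := by
  obtain ⟨hae, hGint, -⟩ := hXsol
  -- basic real facts
  have hv0 : 0 ≤ v := by
    rw [hv]
    exact integral_nonneg fun ω => div_nonneg (norm_nonneg _) Metric.infDist_nonneg
  have h1v : 0 < 1 + v := by linarith
  have hXle : ‖X‖ ≤ d₀ * (1 - v) / 2 :=
    hXnorm.trans (sub_le_self _ (Real.sqrt_nonneg _))
  -- the dominating function
  set g : Ω → ℝ := fun ω => 2 / (1 + v) * (‖K ω‖ / Metric.infDist (ζ ω) (spectrum ℂ A))
    with hg_def
  have hgInt : Integrable g μ := hvInt.const_mul _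
  -- pointwise a.e. norm bound
  have hbnd : ∀ᵐ ω ∂μ,
      ‖K ω ∘L Ring.inverse (A + X - ζ ω • (1 : H →L[ℂ] H))‖ ≤ g ω := by
    filter_upwards [hdist] with ω hω
    set D := Metric.infDist (ζ ω) (spectrum ℂ A) with hD
    have hDpos : 0 < D := lt_of_lt_of_le hd₀ hω
    have hXlt : ‖X‖ < D := by nlinarith
    have hR := pert_resolvent hA hXlt
    have hRD : (D - ‖X‖)⁻¹ ≤ 2 / ((1 + v) * D) := by
      have h2 : (1 + v) * D / 2 ≤ D - ‖X‖ := by nlinarith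
      calc (D - ‖X‖)⁻¹ ≤ ((1 + v) * D / 2)⁻¹ := inv_anti₀ (by positivity) h2
        _ = 2 / ((1 + v) * D) := by rw [inv_div]
    calc ‖K ω ∘L Ring.inverse (A + X - ζ ω • (1 : H →L[ℂ] H))‖
        ≤ ‖K ω‖ * ‖Ring.inverse (A + X - ζ ω • (1 : H →L[ℂ] H))‖ := opNorm_comp_le _ _
      _ ≤ ‖K ω‖ * (D - ‖X‖)⁻¹ := mul_le_mul_of_nonneg_left hR (norm_nonneg _)
      _ ≤ ‖K ω‖ * (2 / ((1 + v) * D)) := mul_le_mul_of_nonneg_left hRD (norm_nonneg _)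
      _ = g ω := by rw [hg_def]; field_simp; rw [← hD, mul_div_cancel_right₀ _ hDpos.ne']
  -- measurability
  have haem : AEStronglyMeasurable
      (fun ω => K ω ∘L Ring.inverse (A + X - ζ ω • (1 : H →L[ℂ] H))) μ := by
    set C : H →L[ℂ] H := Ring.inverse (A + X) with hC
    set f₁ : Ω → H →L[ℂ] H := fun ω =>
      (ζ ω)⁻¹ • (K ω ∘L ((A + X) ∘L Ring.inverse (A + X - ζ ω • (1 : H →L[ℂ] H))) - K ω)
      with hf₁
    set f₂ : Ω → H →L[ℂ] H :=
      ({ω | ζ ω = 0}).indicator (fun ω => K ω ∘L C) with hf₂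
    have hm₁ : AEStronglyMeasurable f₁ μ := by
      apply AEStronglyMeasurable.smul (f := fun ω => (ζ ω)⁻¹)
        (g := fun ω => K ω ∘L ((A + X) ∘L Ring.inverse (A + X - ζ ω • (1 : H →L[ℂ] H))) - K ω)
      · exact (hζ.inv.stronglyMeasurable).aestronglyMeasurable
      · exact hGint.aestronglyMeasurable.sub hK.aestronglyMeasurable
    have hm₂ : AEStronglyMeasurable f₂ μ := by
      apply AEStronglyMeasurable.indicator
      · have hcont : Continuous fun T : H →L[ℂ] H => T ∘L C :=
          ((ContinuousLinearMap.compL ℂ H H H).flip C).continuous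
        exact hcont.comp_aestronglyMeasurable hK.aestronglyMeasurable
      · exact hζ (measurableSet_singleton 0)
    refine (hm₁.add hm₂).congr ?_
    filter_upwards [hae] with ω hu
    by_cases hz0 : ζ ω = 0
    · have : A + X - ζ ω • (1 : H →L[ℂ] H) = A + X := by rw [hz0, zero_smul, sub_zero]
      simp only [Pi.add_apply, hf₁, hf₂, hz0, _root_.inv_zero, zero_smul, sub_zero,
        Set.indicator_of_mem (by simpa using hz0 : ω ∈ {ω | ζ ω = 0}), zero_add, hC]
    · have hz : ω ∉ {ω | ζ ω = 0} := by simpa using hz0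
      simp only [Pi.add_apply, hf₁, hf₂, Set.indicator_of_notMem hz, add_zero]
      simp only [← ContinuousLinearMap.mul_def]
      set R := Ring.inverse (A + X - ζ ω • (1 : H →L[ℂ] H)) with hRd
      have hmul : (A + X - ζ ω • (1 : H →L[ℂ] H)) * R = 1 := Ring.mul_inverse_cancel _ hu
      have hsplit : (A + X) = (A + X - ζ ω • (1 : H →L[ℂ] H)) + ζ ω • (1 : H →L[ℂ] H) := by
        abel
      have hAXR : (A + X) * R = 1 + ζ ω • R := by
        conv_lhs => rw [hsplit]
        rw [add_mul, hmul, smul_mul_assoc, one_mul]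
      rw [hAXR, mul_add, mul_one, mul_smul_comm, add_sub_cancel_left, smul_smul,
        inv_mul_cancel₀ hz0, one_smul]
  -- integrability
  have hint : Integrable
      (fun ω => K ω ∘L Ring.inverse (A + X - ζ ω • (1 : H →L[ℂ] H))) μ :=
    hgInt.mono' haem hbnd
  refine ⟨hint, ?_⟩
  calc ‖∫ ω, K ω ∘L Ring.inverse (A + X - ζ ω • (1 : H →L[ℂ] H)) ∂μ‖
      ≤ ∫ ω, g ω ∂μ := norm_integral_le_of_norm_le hgInt hbnd
    _ = 2 / (1 + v) * ∫ ω, ‖K ω‖ / Metric.infDist (ζ ω) (spectrum ℂ A) ∂μ := by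
        rw [hg_def]
        exact integral_const_mul _ _
    _ = 2 * v / (1 + v) := by rw [← hv]; ring
end

section
/- Under the smallness conditions v < 1 and v·‖Ã‖ < d₀(1−v)²/4, let X be the solution of X = V(Ã+X) with ‖X‖ ≤ r_min, H := Ã + X, and let W(z) be the factor from the factorization theorem. Then for every z ∈ ℂ with dist(z, σ(Ã)) ≤ d₀(1−v)/2 one has ‖W(z) − I‖ ≤ 4v·(d₀+‖Ã‖)/(d₀(1+v)²), and this bound is strictly less than 1. -/
open MeasureTheory ContinuousLinearMap

lemma commute_star_inv_aux {R : Type*} [Monoid R] [StarMul R] (u : Rˣ)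
    (h : Commute (star (u : R)) (u : R)) :
    Commute (star ((↑u⁻¹ : R))) ((↑u⁻¹ : R)) := by
  have h1 : star u * u = u * star u := Units.ext (by
    simpa [Units.coe_star] using h.eq)
  have h2 := congrArg (fun w : Rˣ => ((w⁻¹ : Rˣ) : R)) h1
  simp only [mul_inv_rev] at h2
  simp only [Units.val_mul, Units.coe_star_inv] at h2
  exact h2.symm

lemma selfAdjoint_resolvent_bound {H : Type*} [NormedAddCommGroup H] [InnerProductSpace ℂ H]
    [CompleteSpace H] (A : H →L[ℂ] H) (hA : IsSelfAdjoint A) (w : ℂ) {d : ℝ}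
    (hd : 0 < d) (hdist : d ≤ Metric.infDist w (spectrum ℂ A)) :
    ∃ u : (H →L[ℂ] H)ˣ, ((u : H →L[ℂ] H) = A - w • (1 : H →L[ℂ] H)) ∧
      ‖((u⁻¹ : (H →L[ℂ] H)ˣ) : H →L[ℂ] H)‖ ≤ 1 / d := by
  have hw : w ∉ spectrum ℂ A := by
    intro hmem
    rw [Metric.infDist_zero_of_mem hmem] at hdist
    linarith
  have hu1 : IsUnit (algebraMap ℂ (H →L[ℂ] H) w - A) := spectrum.notMem_iff.mp hw
  have hu : IsUnit (A - w • (1 : H →L[ℂ] H)) := by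
    have := hu1.neg
    rwa [neg_sub, Algebra.algebraMap_eq_smul_one] at this
  refine ⟨hu.unit, hu.unit_spec, ?_⟩
  have hcomm : ∀ c c' : ℂ, Commute (A - c • (1 : H →L[ℂ] H)) (A - c' • (1 : H →L[ℂ] H)) := by
    intro c c'
    have h1 : Commute A (c' • (1 : H →L[ℂ] H)) := (Commute.one_right A).smul_right c'
    have h2 : Commute (c • (1 : H →L[ℂ] H)) A := (Commute.one_left A).smul_left c
    have h3 : Commute (c • (1 : H →L[ℂ] H)) (c' • (1 : H →L[ℂ] H)) :=
      ((Commute.refl (1 : H →L[ℂ] H)).smul_right c').smul_left c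
    exact ((Commute.refl A).sub_left h2).sub_right (h1.sub_left h3)
  have hstar : star (A - w • (1 : H →L[ℂ] H))
      = A - (starRingEnd ℂ w) • (1 : H →L[ℂ] H) := by
    rw [star_sub, hA.star_eq, star_smul, star_one]
    rfl
  have hnormal : IsStarNormal ((hu.unit : (H →L[ℂ] H)ˣ) : H →L[ℂ] H) := by
    constructor
    rw [hu.unit_spec, hstar]
    exact hcomm _ _
  have hnormal' : IsStarNormal ((hu.unit⁻¹ : (H →L[ℂ] H)ˣ) : H →L[ℂ] H) :=
    ⟨commute_star_inv_aux _ hnormal.star_comm_self⟩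
  have hspec : ∀ k ∈ spectrum ℂ ((hu.unit⁻¹ : (H →L[ℂ] H)ˣ) : H →L[ℂ] H), ‖k‖ ≤ 1 / d := by
    intro k hk
    rw [← spectrum.map_inv, Set.mem_inv] at hk
    rw [hu.unit_spec, ← Algebra.algebraMap_eq_smul_one, ← spectrum.sub_singleton_eq] at hk
    rw [Set.mem_sub] at hk
    obtain ⟨a, ha, b, hb, hab⟩ := hk
    rw [Set.mem_singleton_iff] at hb
    have hnk : d ≤ ‖k⁻¹‖ := by
      rw [← hab, hb]
      calc d ≤ Metric.infDist w (spectrum ℂ A) := hdist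
        _ ≤ dist w a := Metric.infDist_le_dist_of_mem ha
        _ = ‖a - w‖ := by rw [dist_comm, dist_eq_norm]
    have hk0 : k ≠ 0 := by
      intro h0
      rw [h0, inv_zero, norm_zero] at hnk
      linarith
    rw [← inv_inv k, norm_inv]
    rw [one_div]
    exact inv_anti₀ hd hnk
  have hsr : spectralRadius ℂ ((hu.unit⁻¹ : (H →L[ℂ] H)ˣ) : H →L[ℂ] H)
      ≤ ENNReal.ofReal (1 / d) := by
    rw [spectralRadius]
    refine iSup₂_le fun k hk => ?_
    rw [← ENNReal.ofReal_coe_nnreal, coe_nnnorm]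
    exact ENNReal.ofReal_le_ofReal (hspec k hk)
  rw [IsStarNormal.spectralRadius_eq_nnnorm] at hsr
  rw [← ENNReal.ofReal_coe_nnreal, coe_nnnorm] at hsr
  exact (ENNReal.ofReal_le_ofReal_iff (by positivity)).mp hsr

lemma perturbed_resolvent_bound {H : Type*} [NormedAddCommGroup H] [InnerProductSpace ℂ H]
    [CompleteSpace H] (A : H →L[ℂ] H) (hA : IsSelfAdjoint A) (X : H →L[ℂ] H) (w : ℂ)
    {d v : ℝ} (hd : 0 < d) (hv0 : 0 ≤ v) (hv1 : v < 1)
    (hdist : d ≤ Metric.infDist w (spectrum ℂ A))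
    (hX : ‖X‖ ≤ d * (1 - v) / 2) :
    IsUnit (A + X - w • (1 : H →L[ℂ] H)) ∧
      ‖Ring.inverse (A + X - w • (1 : H →L[ℂ] H))‖ ≤ 2 / (d * (1 + v)) := by
  obtain ⟨u, hu, hub⟩ := selfAdjoint_resolvent_bound A hA w hd hdist
  set t : H →L[ℂ] H := -(((u⁻¹ : (H →L[ℂ] H)ˣ) : H →L[ℂ] H) * X) with ht
  have htn : ‖t‖ ≤ (1 - v) / 2 := by
    rw [ht, norm_neg]
    calc ‖((u⁻¹ : (H →L[ℂ] H)ˣ) : H →L[ℂ] H) * X‖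
        ≤ ‖((u⁻¹ : (H →L[ℂ] H)ˣ) : H →L[ℂ] H)‖ * ‖X‖ := norm_mul_le _ _
      _ ≤ (1 / d) * (d * (1 - v) / 2) := by
          apply mul_le_mul hub hX (norm_nonneg _) (by positivity)
      _ = (1 - v) / 2 := by field_simp
  have ht1 : ‖t‖ < 1 := lt_of_le_of_lt htn (by linarith)
  set w' : (H →L[ℂ] H)ˣ := Units.oneSub t ht1 with hw'
  have key : A + X - w • (1 : H →L[ℂ] H) = ((u * w' : (H →L[ℂ] H)ˣ) : H →L[ℂ] H) := by
    rw [Units.val_mul, hu, Units.val_oneSub, ht, sub_neg_eq_add, mul_add, mul_one,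
      ← mul_assoc]
    rw [show ((A : H →L[ℂ] H) - w • 1) = ((u : (H →L[ℂ] H)ˣ) : H →L[ℂ] H) from hu.symm,
      Units.mul_inv, one_mul, hu]
    abel
  constructor
  · exact key ▸ (u * w').isUnit
  · rw [key, Ring.inverse_unit, mul_inv_rev, Units.val_mul]
    have hw'b : ‖((w'⁻¹ : (H →L[ℂ] H)ˣ) : H →L[ℂ] H)‖ ≤ 2 / (1 + v) := by
      have he : ((w'⁻¹ : (H →L[ℂ] H)ˣ) : H →L[ℂ] H) = ∑' n : ℕ, t ^ n := by
        rw [hw']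
        rw [geom_series_eq_inverse t ht1, NormedRing.inverse_one_sub t ht1]
      rw [he]
      have h1 : ‖(1 : H →L[ℂ] H)‖ ≤ 1 := by
        rw [ContinuousLinearMap.one_def]; exact ContinuousLinearMap.norm_id_le
      have h2 := tsum_geometric_le_of_norm_lt_one t ht1
      have h3 : (1 - ‖t‖)⁻¹ ≤ 2 / (1 + v) := by
        have hpos : 0 < (1 + v) / 2 := by linarith
        have : (1 + v) / 2 ≤ 1 - ‖t‖ := by linarith
        calc (1 - ‖t‖)⁻¹ ≤ ((1 + v) / 2)⁻¹ := inv_anti₀ hpos this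
          _ = 2 / (1 + v) := by rw [inv_div]
      linarith
    calc ‖((w'⁻¹ : (H →L[ℂ] H)ˣ) : H →L[ℂ] H) * ((u⁻¹ : (H →L[ℂ] H)ˣ) : H →L[ℂ] H)‖
        ≤ ‖((w'⁻¹ : (H →L[ℂ] H)ˣ) : H →L[ℂ] H)‖ * ‖((u⁻¹ : (H →L[ℂ] H)ˣ) : H →L[ℂ] H)‖ :=
          norm_mul_le _ _
      _ ≤ (2 / (1 + v)) * (1 / d) := by
          apply mul_le_mul hw'b hub (norm_nonneg _) (by positivity)
      _ = 2 / (d * (1 + v)) := by rw [div_mul_div_comm, mul_one, mul_comm (1+v) d]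

lemma ringInverse_aestronglyMeasurable
    {H : Type*} [NormedAddCommGroup H] [NormedSpace ℂ H] [CompleteSpace H]
    {Ω : Type*} [MeasurableSpace Ω] (μ : MeasureTheory.Measure Ω) {ζ : Ω → ℂ}
    (hζ : Measurable ζ) (Hop : H →L[ℂ] H) :
    AEStronglyMeasurable (fun ω => Ring.inverse (Hop - ζ ω • (1 : H →L[ℂ] H))) μ := by
  classical
  set φ : ℂ → (H →L[ℂ] H) := fun w => Hop - w • (1 : H →L[ℂ] H) with hφ
  have hφc : Continuous φ := by
    apply Continuous.sub continuous_const
    exact (continuous_id.smul continuous_const)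
  set g : ℂ → (H →L[ℂ] H) := fun w => Ring.inverse (φ w) with hg
  set U : Set ℂ := φ ⁻¹' {x | IsUnit x} with hU
  have hUopen : IsOpen U := Units.isOpen.preimage hφc
  have hcont : ContinuousOn g U := by
    intro w hw
    have hwu : IsUnit (φ w) := hw
    have h1 : ContinuousAt Ring.inverse (φ w) := by
      have := NormedRing.inverse_continuousAt hwu.unit
      rwa [hwu.unit_spec] at this
    exact (h1.comp (hφc.continuousAt)).continuousWithinAt
  have hgs : StronglyMeasurable g := by
    borelize (H →L[ℂ] H)
    rw [stronglyMeasurable_iff_measurable_separable]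
    constructor
    · have hpw : g = U.piecewise g (fun _ => 0) := by
        funext w
        by_cases hw : w ∈ U
        · rw [Set.piecewise_eq_of_mem _ _ _ hw]
        · rw [Set.piecewise_eq_of_notMem _ _ _ hw, hg]
          exact Ring.inverse_non_unit _ hw
      rw [hpw]
      exact hcont.measurable_piecewise continuousOn_const hUopen.measurableSet
    · have hsub : Set.range g ⊆ g '' U ∪ {0} := by
        rintro x ⟨w, rfl⟩
        by_cases hw : w ∈ U
        · exact Or.inl ⟨w, hw, rfl⟩
        · right
          simp only [Set.mem_singleton_iff]
          exact Ring.inverse_non_unit _ hw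
      refine TopologicalSpace.IsSeparable.mono ?_ hsub
      refine TopologicalSpace.IsSeparable.union ?_ ?_
      · exact hcont.isSeparable_image (TopologicalSpace.IsSeparable.of_separableSpace U)
      · exact (Set.finite_singleton 0).isSeparable
  exact (hgs.comp_measurable hζ).aestronglyMeasurable


set_option maxHeartbeats 1000000 in
/-- The key norm estimate of the proof of Theorem 4.1: for
`dist(z, σ(Ã)) ≤ d₀(1-v)/2` one has
`‖W(z) - I‖ ≤ 4v(d₀+‖Ã‖)/(d₀(1+v)²) < 1`. -/
theorem W_minus_one_estimate
    {H : Type*} [NormedAddCommGroup H] [InnerProductSpace ℂ H] [CompleteSpace H]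
    {Ω : Type*} [MeasurableSpace Ω] (μ : Measure Ω)
    (ζ : Ω → ℂ) (hζ : Measurable ζ)
    (K : Ω → H →L[ℂ] H) (hK : Integrable K μ)
    (A : H →L[ℂ] H) (hA : IsSelfAdjoint A)
    (d₀ : ℝ) (hd₀ : 0 < d₀)
    (hdist : ∀ᵐ ω ∂μ, d₀ ≤ Metric.infDist (ζ ω) (spectrum ℂ A))
    (hvInt : Integrable (fun ω => ‖K ω‖ / Metric.infDist (ζ ω) (spectrum ℂ A)) μ)
    (v : ℝ) (hv : v = ∫ ω, ‖K ω‖ / Metric.infDist (ζ ω) (spectrum ℂ A) ∂μ)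
    (hv1 : v < 1) (hv2 : v * ‖A‖ < d₀ * (1 - v) ^ 2 / 4)
    (X : H →L[ℂ] H)
    (hXnorm : ‖X‖ ≤ d₀ * (1 - v) / 2 -
      Real.sqrt (d₀ ^ 2 * (1 - v) ^ 2 / 4 - d₀ * v * ‖A‖))
    (hXsol : IsSolution μ ζ K A X) :
    4 * v * (d₀ + ‖A‖) / (d₀ * (1 + v) ^ 2) < 1 ∧
    ∀ z : ℂ, Metric.infDist z (spectrum ℂ A) ≤ d₀ * (1 - v) / 2 →
      ‖Wfac μ ζ K (A + X) z - (1 : H →L[ℂ] H)‖ ≤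
        4 * v * (d₀ + ‖A‖) / (d₀ * (1 + v) ^ 2) := by
  have hv0 : 0 ≤ v := by
    rw [hv]
    exact integral_nonneg fun ω => div_nonneg (norm_nonneg _) Metric.infDist_nonneg
  have h1v : (0:ℝ) < 1 + v := by linarith
  have hAnn : (0:ℝ) ≤ ‖A‖ := norm_nonneg A
  constructor
  · rw [div_lt_one (by positivity)]
    nlinarith
  intro z hz
  have hXr : ‖X‖ ≤ d₀ * (1 - v) / 2 := by
    have := Real.sqrt_nonneg (d₀ ^ 2 * (1 - v) ^ 2 / 4 - d₀ * v * ‖A‖)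
    linarith
  set R : Ω → H →L[ℂ] H := fun ω => Ring.inverse (A + X - ζ ω • (1 : H →L[ℂ] H)) with hR
  set F : Ω → H →L[ℂ] H := fun ω => K ω ∘L R ω with hF
  have hRm : AEStronglyMeasurable R μ := ringInverse_aestronglyMeasurable μ hζ (A + X)
  have hFm : AEStronglyMeasurable F μ := by
    have := hK.aestronglyMeasurable.mul hRm
    exact this
  have hae : ∀ᵐ ω ∂μ,
      ‖F ω‖ ≤ (2/(1+v)) * (‖K ω‖ / Metric.infDist (ζ ω) (spectrum ℂ A))
      ∧ d₀*(1+v)/2 ≤ ‖z - ζ ω‖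
      ∧ ‖(ζ ω * (z - ζ ω)⁻¹) • F ω‖ ≤
          (4*(d₀+‖A‖)/(d₀*(1+v)^2)) * (‖K ω‖ / Metric.infDist (ζ ω) (spectrum ℂ A)) := by
    filter_upwards [hdist] with ω hdω
    set D := Metric.infDist (ζ ω) (spectrum ℂ A) with hD
    have hD0 : 0 < D := lt_of_lt_of_le hd₀ hdω
    have h1mv : (0:ℝ) ≤ 1 - v := by linarith
    have hXD : ‖X‖ ≤ D * (1 - v) / 2 := by nlinarith [mul_nonneg (sub_nonneg.mpr hdω) h1mv]
    obtain ⟨hun, hRb⟩ := perturbed_resolvent_bound A hA X (ζ ω) hD0 hv0 hv1 le_rfl hXD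
    have hFb : ‖F ω‖ ≤ ‖K ω‖ * (2/(D*(1+v))) :=
      le_trans (ContinuousLinearMap.opNorm_comp_le _ _)
        (mul_le_mul_of_nonneg_left hRb (norm_nonneg _))
    have hFb' : ‖F ω‖ ≤ (2/(1+v)) * (‖K ω‖ / D) := by
      refine hFb.trans (le_of_eq ?_)
      rw [mul_comm D (1+v), div_mul_eq_div_div]
      ring
    have hne : (spectrum ℂ A).Nonempty := by
      rcases Set.eq_empty_or_nonempty (spectrum ℂ A) with h | h
      · exfalso
        have : D = 0 := by rw [hD, h, Metric.infDist_empty]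
        linarith
      · exact h
    have hζb : ‖ζ ω‖ ≤ D + ‖A‖ := by
      by_contra hc
      push_neg at hc
      have hlt : Metric.infDist (ζ ω) (spectrum ℂ A) < ‖ζ ω‖ - ‖A‖ := by
        rw [← hD]; linarith
      rw [Metric.infDist_lt_iff hne] at hlt
      obtain ⟨a, ha, hlt2⟩ := hlt
      have hone : ‖(1 : H →L[ℂ] H)‖ ≤ 1 := by
        rw [ContinuousLinearMap.one_def]; exact ContinuousLinearMap.norm_id_le
      have h1 : ‖a‖ ≤ ‖A‖ := by
        have h2 := spectrum.norm_le_norm_mul_of_mem ha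
        nlinarith [norm_nonneg (1 : H →L[ℂ] H)]
      have h2 : ‖ζ ω‖ - ‖a‖ ≤ dist (ζ ω) a := by
        rw [dist_eq_norm]; exact norm_sub_norm_le _ _
      linarith
    have hzb : D * (1+v)/2 ≤ ‖z - ζ ω‖ := by
      have h3 : D ≤ Metric.infDist z (spectrum ℂ A) + dist (ζ ω) z :=
        Metric.infDist_le_infDist_add_dist
      have h4 : dist (ζ ω) z = ‖z - ζ ω‖ := by rw [dist_eq_norm, norm_sub_rev]
      nlinarith [mul_nonneg (sub_nonneg.mpr hdω) h1mv]
    have hzb' : d₀ * (1+v)/2 ≤ ‖z - ζ ω‖ := by nlinarith [mul_nonneg (sub_nonneg.mpr hdω) h1v.le]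
    have hinv : ‖z - ζ ω‖⁻¹ ≤ 2/(D*(1+v)) := by
      have h5 : (0:ℝ) < D*(1+v)/2 := by positivity
      calc ‖z - ζ ω‖⁻¹ ≤ (D*(1+v)/2)⁻¹ := inv_anti₀ h5 hzb
        _ = 2/(D*(1+v)) := by rw [inv_div]
    have hscal : ‖ζ ω * (z - ζ ω)⁻¹‖ ≤ (D+‖A‖) * (2/(D*(1+v))) := by
      rw [norm_mul, norm_inv]
      exact mul_le_mul hζb hinv (inv_nonneg.mpr (norm_nonneg _)) (by positivity)
    refine ⟨hFb', hzb', ?_⟩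
    calc ‖(ζ ω * (z - ζ ω)⁻¹) • F ω‖ = ‖ζ ω * (z - ζ ω)⁻¹‖ * ‖F ω‖ := norm_smul _ _
      _ ≤ ((D+‖A‖) * (2/(D*(1+v)))) * (‖K ω‖ * (2/(D*(1+v)))) :=
          mul_le_mul hscal hFb (norm_nonneg _) (by positivity)
      _ = (4*(D+‖A‖)/(D*(1+v)^2)) * (‖K ω‖ / D) := by
          field_simp
          ring
      _ ≤ (4*(d₀+‖A‖)/(d₀*(1+v)^2)) * (‖K ω‖ / D) := by
          refine mul_le_mul_of_nonneg_right ?_ (div_nonneg (norm_nonneg _) hD0.le)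
          rw [div_le_div_iff₀ (by positivity) (by positivity)]
          nlinarith [mul_nonneg (mul_nonneg (sub_nonneg.mpr hdω) hAnn) (sq_nonneg (1+v))]
  have hFint : Integrable F μ :=
    Integrable.mono' (hvInt.const_mul _) hFm (hae.mono fun ω h => h.1)
  set G : Ω → H →L[ℂ] H := fun ω => (z - ζ ω)⁻¹ • F ω with hG
  have hGm : AEStronglyMeasurable G μ :=
    AEStronglyMeasurable.smul ((measurable_const.sub hζ).inv).aestronglyMeasurable hFm
  have hGb : ∀ᵐ ω ∂μ, ‖G ω‖ ≤ ((2/(d₀*(1+v))) * (2/(1+v))) *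
      (‖K ω‖ / Metric.infDist (ζ ω) (spectrum ℂ A)) := by
    filter_upwards [hae] with ω h
    have hinv : ‖z - ζ ω‖⁻¹ ≤ 2/(d₀*(1+v)) := by
      have h5 : (0:ℝ) < d₀*(1+v)/2 := by positivity
      calc ‖z - ζ ω‖⁻¹ ≤ (d₀*(1+v)/2)⁻¹ := inv_anti₀ h5 h.2.1
        _ = 2/(d₀*(1+v)) := by rw [inv_div]
    calc ‖G ω‖ = ‖z - ζ ω‖⁻¹ * ‖F ω‖ := by rw [hG, norm_smul, norm_inv]
      _ ≤ (2/(d₀*(1+v))) * ((2/(1+v)) * (‖K ω‖ / Metric.infDist (ζ ω) (spectrum ℂ A))) := by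
          refine mul_le_mul hinv h.1 (norm_nonneg _) (by positivity)
      _ = ((2/(d₀*(1+v))) * (2/(1+v))) * (‖K ω‖ / Metric.infDist (ζ ω) (spectrum ℂ A)) := by
          ring
  have hGint : Integrable G μ := Integrable.mono' (hvInt.const_mul _) hGm hGb
  have hWsub : Wfac μ ζ K (A + X) z - (1 : H →L[ℂ] H) = ∫ ω, (z • G ω - F ω) ∂μ := by
    have hzG : Integrable (fun ω => z • G ω) μ := hGint.smul z
    rw [integral_sub hzG hFint, integral_smul]
    simp only [Wfac, hG, hF, hR]
    abel
  have hcongr : (∫ ω, (z • G ω - F ω) ∂μ) = ∫ ω, ((ζ ω * (z - ζ ω)⁻¹) • F ω) ∂μ := by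
    apply integral_congr_ae
    filter_upwards [hae] with ω h
    have hzne : z - ζ ω ≠ 0 := by
      intro h0
      have h6 := h.2.1
      rw [h0, norm_zero] at h6
      nlinarith
    have hkey : z * (z - ζ ω)⁻¹ - 1 = ζ ω * (z - ζ ω)⁻¹ := by
      field_simp
      ring
    calc z • G ω - F ω = (z * (z - ζ ω)⁻¹) • F ω - (1:ℂ) • F ω := by
          rw [hG, smul_smul, one_smul]
      _ = (z * (z - ζ ω)⁻¹ - 1) • F ω := (sub_smul _ _ _).symm
      _ = (ζ ω * (z - ζ ω)⁻¹) • F ω := by rw [hkey]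
  rw [hWsub, hcongr]
  have hnorm := norm_integral_le_of_norm_le
    (hvInt.const_mul (4*(d₀+‖A‖)/(d₀*(1+v)^2))) (hae.mono fun ω h => h.2.2)
  refine hnorm.trans ?_
  have : (∫ ω, (4*(d₀+‖A‖)/(d₀*(1+v)^2)) *
      (‖K ω‖ / Metric.infDist (ζ ω) (spectrum ℂ A)) ∂μ)
      = (4*(d₀+‖A‖)/(d₀*(1+v)^2)) * v := by
    rw [hv]
    simp_rw [← smul_eq_mul]
    rw [integral_smul]
  rw [this]
  apply le_of_eq
  ring
end

section
/- Under the smallness conditions v < 1 and v·‖Ã‖ < d₀(1−v)²/4, let X be the solution of X = V(Ã+X) with ‖X‖ ≤ r_min, H := Ã + X, and let W(z) be the factor from the factorization theorem. Then for every z ∈ ℂ with dist(z, σ(Ã)) ≤ d₀(1−v)/2 the operator W(z) is boundedly invertible and ‖W(z)⁻¹‖ ≤ (1 − 4v·(d₀+‖Ã‖)/(d₀(1+v)²))⁻¹ < ∞. -/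
open MeasureTheory ContinuousLinearMap

section Neumann
variable {R : Type*} [NormedRing R] [NormOneClass R] [CompleteSpace R]

lemma neumann_bound {t : R} (h : ‖t‖ < 1) :
    IsUnit (1 - t) ∧ ‖Ring.inverse (1 - t)‖ ≤ (1 - ‖t‖)⁻¹ := by
  refine ⟨isUnit_one_sub_of_norm_lt_one h, ?_⟩
  rw [← geom_series_eq_inverse t h]
  have hs : Summable fun n : ℕ => ‖t‖ ^ n := summable_geometric_of_lt_one (norm_nonneg t) h
  have hs' : Summable fun n : ℕ => ‖t ^ n‖ :=
    hs.of_nonneg_of_le (fun n => norm_nonneg _) (fun n => norm_pow_le t n)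
  calc ‖∑' n : ℕ, t ^ n‖ ≤ ∑' n : ℕ, ‖t ^ n‖ := norm_tsum_le_tsum_norm hs'
    _ ≤ ∑' n : ℕ, ‖t‖ ^ n := Summable.tsum_le_tsum (fun n => norm_pow_le t n) hs' hs
    _ = (1 - ‖t‖)⁻¹ := tsum_geometric_of_lt_one (norm_nonneg t) h

end Neumann

/-- two-sided inverse gives `Ring.inverse`. -/
lemma ring_inverse_of_two_sided {R : Type*} [MonoidWithZero R] {a b : R} (h1 : a * b = 1)
    (h2 : b * a = 1) : IsUnit a ∧ Ring.inverse a = b := by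
  refine ⟨⟨⟨a, b, h1, h2⟩, rfl⟩, ?_⟩
  have := Ring.inverse_unit (⟨a, b, h1, h2⟩ : Rˣ)
  simpa using this

section Resolvent
variable {H : Type*} [NormedAddCommGroup H] [InnerProductSpace ℂ H] [CompleteSpace H]

lemma resolvent_selfAdjoint {T : H →L[ℂ] H} (hT : IsSelfAdjoint T) {ζ : ℂ}
    (hdist : 0 < Metric.infDist ζ (spectrum ℂ T)) :
    IsUnit (T - ζ • (1 : H →L[ℂ] H)) ∧
    ‖Ring.inverse (T - ζ • (1 : H →L[ℂ] H))‖ ≤ (Metric.infDist ζ (spectrum ℂ T))⁻¹ := by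
  have hnormal : IsStarNormal T := hT.isStarNormal
  set f : ℂ → ℂ := fun x => (x - ζ)⁻¹ with hf
  set g : ℂ → ℂ := fun x => x - ζ with hg
  have hne : ∀ x ∈ spectrum ℂ T, x - ζ ≠ 0 := by
    intro x hx h0
    rw [sub_eq_zero] at h0
    subst h0
    rw [Metric.infDist_zero_of_mem hx] at hdist
    exact lt_irrefl 0 hdist
  have hgc : ContinuousOn g (spectrum ℂ T) := (continuous_id.sub continuous_const).continuousOn
  have hfc : ContinuousOn f (spectrum ℂ T) := hgc.inv₀ hne
  have hgT : cfc g T = T - ζ • (1 : H →L[ℂ] H) := by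
    rw [hg]
    rw [cfc_sub (fun x : ℂ => x) (fun _ : ℂ => ζ) T, cfc_id' ℂ T, cfc_const ζ T,
      Algebra.algebraMap_eq_smul_one]
  have h1 : (T - ζ • (1 : H →L[ℂ] H)) * cfc f T = 1 := by
    rw [← hgT, ← cfc_mul g f T]
    rw [cfc_congr (g := fun _ => (1 : ℂ)) (fun x hx => mul_inv_cancel₀ (hne x hx)), cfc_const 1 T,
      map_one]
  have h2 : cfc f T * (T - ζ • (1 : H →L[ℂ] H)) = 1 := by
    rw [← hgT, ← cfc_mul f g T]
    rw [cfc_congr (g := fun _ => (1 : ℂ)) (fun x hx => inv_mul_cancel₀ (hne x hx)), cfc_const 1 T,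
      map_one]
  obtain ⟨hu, hinv⟩ := ring_inverse_of_two_sided h1 h2
  refine ⟨hu, ?_⟩
  rw [hinv]
  refine norm_cfc_le (inv_nonneg.2 hdist.le) fun x hx => ?_
  rw [hf, norm_inv]
  refine inv_anti₀ hdist ?_
  calc Metric.infDist ζ (spectrum ℂ T) ≤ dist ζ x := Metric.infDist_le_dist_of_mem hx
    _ = ‖x - ζ‖ := by rw [dist_comm, dist_eq_norm]

end Resolvent

section Perturb
variable {R : Type*} [NormedRing R] [NormOneClass R] [CompleteSpace R]

lemma perturbed_inverse {B X : R} {d : ℝ} (hd : 0 < d) (hu : IsUnit B)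
    (hB : ‖Ring.inverse B‖ ≤ d⁻¹) (hX : ‖X‖ < d) :
    IsUnit (B + X) ∧ ‖Ring.inverse (B + X)‖ ≤ (d - ‖X‖)⁻¹ := by
  set t : R := -(Ring.inverse B * X) with ht
  have htn : ‖t‖ ≤ d⁻¹ * ‖X‖ := by
    rw [ht, norm_neg]
    exact (norm_mul_le _ _).trans (by gcongr)
  have hd1 : d⁻¹ * ‖X‖ < 1 := by
    rw [inv_mul_lt_iff₀ hd, mul_one]; exact hX
  have htlt : ‖t‖ < 1 := htn.trans_lt hd1
  have hfact : B + X = B * (1 - t) := by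
    rw [ht, sub_neg_eq_add, mul_add, mul_one, ← mul_assoc, Ring.mul_inverse_cancel B hu, one_mul]
  obtain ⟨hu1, hb1⟩ := neumann_bound htlt
  have huBX : IsUnit (B + X) := hfact ▸ hu.mul hu1
  refine ⟨huBX, ?_⟩
  have hinv : Ring.inverse (B + X) = Ring.inverse (1 - t) * Ring.inverse B := by
    have e1 : B + X = ((hu.unit * Units.oneSub t htlt : Rˣ) : R) := by
      rw [hfact, Units.val_mul, IsUnit.unit_spec, Units.val_oneSub]
    rw [e1, Ring.inverse_unit, mul_inv_rev, Units.val_mul, NormedRing.inverse_one_sub t htlt]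
    congr 1
    rw [← Ring.inverse_unit hu.unit, IsUnit.unit_spec]
  rw [hinv]
  have h1 : (0:ℝ) < 1 - ‖t‖ := by linarith
  have h2 : (0:ℝ) < 1 - d⁻¹ * ‖X‖ := by linarith
  calc ‖Ring.inverse (1 - t) * Ring.inverse B‖ ≤ (1 - ‖t‖)⁻¹ * d⁻¹ := by
        refine (norm_mul_le _ _).trans ?_
        exact mul_le_mul hb1 hB (norm_nonneg _) (by positivity)
    _ ≤ (1 - d⁻¹ * ‖X‖)⁻¹ * d⁻¹ := by
        refine mul_le_mul_of_nonneg_right (inv_anti₀ h2 (by linarith)) (by positivity)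
    _ = (d - ‖X‖)⁻¹ := by
        rw [← mul_inv]
        congr 1
        field_simp

end Perturb

lemma arithM {D d₀ a k v : ℝ} (hd₀ : 0 < d₀) (hD : d₀ ≤ D) (ha : 0 ≤ a) (hk : 0 ≤ k) (hv : 0 ≤ v) :
    (D + a) * (2 / (D * (1 + v))) * (k * (2 / (D * (1 + v)))) ≤
      4 * (d₀ + a) / (d₀ * (1 + v) ^ 2) * (k / D) := by
  have hDp : 0 < D := hd₀.trans_le hD
  have h1v : 0 < 1 + v := by linarith
  field_simp
  ring_nf
  nlinarith [mul_le_mul_of_nonneg_left hD (by positivity : (0:ℝ) ≤ k * a * (1+v)^2 * D),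
    mul_pos hDp h1v, sq_nonneg (1+v), mul_nonneg hk ha, mul_le_mul_of_nonneg_left hD (mul_nonneg hk ha)]

lemma arith2 {D k v : ℝ} (hDp : 0 < D) (h1v : 0 < 1 + v) (hk : 0 ≤ k) :
    k * (2 / (D * (1 + v))) ≤ 2 / (1 + v) * (k / D) := by
  apply le_of_eq
  field_simp

lemma arith3 {D d₀ k v : ℝ} (hd₀ : 0 < d₀) (hD : d₀ ≤ D) (h1v : 0 < 1 + v) (hk : 0 ≤ k) :
    (2 / (D * (1 + v))) * (k * (2 / (D * (1 + v)))) ≤ 4 / (d₀ * (1 + v) ^ 2) * (k / D) := by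
  have hDp : 0 < D := hd₀.trans_le hD
  field_simp
  ring_nf
  nlinarith [mul_le_mul_of_nonneg_left hD (by positivity : (0:ℝ) ≤ k * (1+v)^2 * D),
    mul_le_mul_of_nonneg_left hD hk]

set_option maxHeartbeats 2000000 in
/-- Invertibility of `W(z)` with estimate (4.3) (`Mtest`) of Theorem 4.1: for
`dist(z, σ(Ã)) ≤ d₀(1-v)/2` the operator `W(z)` is boundedly invertible and
`‖W(z)⁻¹‖ ≤ (1 - 4v(d₀+‖Ã‖)/(d₀(1+v)²))⁻¹`. -/
theorem W_invertible_with_estimate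
    {H : Type*} [NormedAddCommGroup H] [InnerProductSpace ℂ H] [CompleteSpace H]
    {Ω : Type*} [MeasurableSpace Ω] (μ : Measure Ω)
    (ζ : Ω → ℂ) (hζ : Measurable ζ)
    (K : Ω → H →L[ℂ] H) (hK : Integrable K μ)
    (A : H →L[ℂ] H) (hA : IsSelfAdjoint A)
    (d₀ : ℝ) (hd₀ : 0 < d₀)
    (hdist : ∀ᵐ ω ∂μ, d₀ ≤ Metric.infDist (ζ ω) (spectrum ℂ A))
    (hvInt : Integrable (fun ω => ‖K ω‖ / Metric.infDist (ζ ω) (spectrum ℂ A)) μ)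
    (v : ℝ) (hv : v = ∫ ω, ‖K ω‖ / Metric.infDist (ζ ω) (spectrum ℂ A) ∂μ)
    (hv1 : v < 1) (hv2 : v * ‖A‖ < d₀ * (1 - v) ^ 2 / 4)
    (X : H →L[ℂ] H)
    (hXnorm : ‖X‖ ≤ d₀ * (1 - v) / 2 -
      Real.sqrt (d₀ ^ 2 * (1 - v) ^ 2 / 4 - d₀ * v * ‖A‖))
    (hXsol : IsSolution μ ζ K A X) :
    ∀ z : ℂ, Metric.infDist z (spectrum ℂ A) ≤ d₀ * (1 - v) / 2 →
      IsUnit (Wfac μ ζ K (A + X) z) ∧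
      ‖Ring.inverse (Wfac μ ζ K (A + X) z)‖ ≤
        (1 - 4 * v * (d₀ + ‖A‖) / (d₀ * (1 + v) ^ 2))⁻¹ := by
  intro z hz
  have hv0 : 0 ≤ v := by
    rw [hv]
    exact integral_nonneg fun ω => div_nonneg (norm_nonneg _) Metric.infDist_nonneg
  have hq1 : 4 * v * (d₀ + ‖A‖) / (d₀ * (1 + v) ^ 2) < 1 := by
    rw [div_lt_one (by positivity)]
    nlinarith [norm_nonneg A]
  have hq0 : 0 ≤ 4 * v * (d₀ + ‖A‖) / (d₀ * (1 + v) ^ 2) := by positivity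
  rcases subsingleton_or_nontrivial H with hS | hN
  · haveI : Subsingleton (H →L[ℂ] H) :=
      ⟨fun f g => ContinuousLinearMap.ext fun x => Subsingleton.elim _ _⟩
    refine ⟨isUnit_of_subsingleton _, ?_⟩
    rw [Subsingleton.elim (Ring.inverse (Wfac μ ζ K (A + X) z)) (0 : H →L[ℂ] H), norm_zero]
    exact inv_nonneg.2 (by linarith)
  -- nontrivial case
  have h1v : (0:ℝ) < 1 + v := by linarith
  have hXle : ‖X‖ ≤ d₀ * (1 - v) / 2 :=
    hXnorm.trans (by nlinarith [Real.sqrt_nonneg (d₀ ^ 2 * (1 - v) ^ 2 / 4 - d₀ * v * ‖A‖)])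
  set D : Ω → ℝ := fun ω => Metric.infDist (ζ ω) (spectrum ℂ A) with hDdef
  set Rf : Ω → H →L[ℂ] H := fun ω => Ring.inverse (A + X - ζ ω • (1 : H →L[ℂ] H)) with hRdef
  -- a.e. package
  have hae : ∀ᵐ ω ∂μ, IsUnit (A + X - ζ ω • (1 : H →L[ℂ] H)) ∧
      ‖Rf ω‖ ≤ 2 / (D ω * (1 + v)) ∧
      D ω * (1 + v) / 2 ≤ ‖z - ζ ω‖ ∧
      ‖ζ ω‖ ≤ D ω + ‖A‖ ∧ d₀ ≤ D ω := by
    filter_upwards [hdist] with ω hω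
    have hDp : 0 < D ω := hd₀.trans_le hω
    obtain ⟨hu, hb⟩ := resolvent_selfAdjoint hA (ζ := ζ ω) hDp
    have hXlt : ‖X‖ < D ω := by nlinarith
    have e : (A - ζ ω • (1 : H →L[ℂ] H)) + X = A + X - ζ ω • (1 : H →L[ℂ] H) := by abel
    obtain ⟨hu2, hb2⟩ := perturbed_inverse hDp hu hb hXlt
    rw [e] at hu2 hb2
    refine ⟨hu2, ?_, ?_, ?_, hω⟩
    · refine hb2.trans ?_
      rw [show (2:ℝ) / (D ω * (1+v)) = (D ω * (1+v)/2)⁻¹ by rw [inv_div]]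
      refine inv_anti₀ (by positivity) ?_
      nlinarith
    · obtain ⟨a, haσ, hda⟩ := (spectrum.isClosed (𝕜 := ℂ) A).exists_infDist_eq_dist
        (spectrum.nonempty A) z
      have h1 : D ω ≤ dist (ζ ω) a := Metric.infDist_le_dist_of_mem haσ
      have h2 : dist z a ≤ d₀ * (1 - v) / 2 := hda ▸ hz
      have h3 : dist (ζ ω) a ≤ dist (ζ ω) z + dist z a := dist_triangle _ _ _
      have h4 : dist (ζ ω) z = ‖z - ζ ω‖ := by rw [dist_comm, dist_eq_norm]
      nlinarith
    · obtain ⟨b, hbσ, hdb⟩ := (spectrum.isClosed (𝕜 := ℂ) A).exists_infDist_eq_dist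
        (spectrum.nonempty A) (ζ ω)
      have h1 : ‖b‖ ≤ ‖A‖ := spectrum.norm_le_norm_of_mem hbσ
      have h2 : ‖ζ ω‖ ≤ dist (ζ ω) b + ‖b‖ := by
        rw [dist_eq_norm]
        simpa using norm_add_le (ζ ω - b) b
      have h3 : D ω = dist (ζ ω) b := hdb
      linarith
  -- a.e. pointwise bound for K ∘ R
  have haeKR : ∀ᵐ ω ∂μ, ‖K ω ∘L Rf ω‖ ≤ 2 / (1 + v) * (‖K ω‖ / D ω) := by
    filter_upwards [hae] with ω ⟨hu, hb, _, _, hd⟩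
    have hDp : 0 < D ω := hd₀.trans_le hd
    calc ‖K ω ∘L Rf ω‖ ≤ ‖K ω‖ * ‖Rf ω‖ := opNorm_comp_le _ _
      _ ≤ ‖K ω‖ * (2 / (D ω * (1 + v))) := mul_le_mul_of_nonneg_left hb (norm_nonneg _)
      _ ≤ 2 / (1 + v) * (‖K ω‖ / D ω) := arith2 hDp h1v (norm_nonneg _)
  -- measurability of K ∘ R
  have hmeasKR : AEStronglyMeasurable (fun ω => K ω ∘L Rf ω) μ := by
    classical
    set G : Ω → H →L[ℂ] H :=
      fun ω => K ω ∘L ((A + X) ∘L Ring.inverse (A + X - ζ ω • (1 : H →L[ℂ] H))) with hGdef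
    have hGint : Integrable G μ := hXsol.2.1
    set F : Ω → H →L[ℂ] H := Set.piecewise {ω | ζ ω = 0}
      (fun ω => K ω * Ring.inverse (A + X : H →L[ℂ] H))
      (fun ω => (ζ ω)⁻¹ • (G ω - K ω)) with hFdef
    have hsmeas : MeasurableSet {ω | ζ ω = 0} := hζ (measurableSet_singleton 0)
    have hFmeas : AEStronglyMeasurable F μ := by
      refine AEStronglyMeasurable.piecewise hsmeas ?_ ?_
      · exact ((continuous_mul_right _).comp_aestronglyMeasurable
          hK.aestronglyMeasurable).restrict
      · exact (AEStronglyMeasurable.smul hζ.inv.aestronglyMeasurable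
          (hGint.aestronglyMeasurable.sub hK.aestronglyMeasurable)).restrict
    refine hFmeas.congr ?_
    filter_upwards [hae] with ω hω
    obtain ⟨hu, -, -, -, -⟩ := hω
    by_cases h0 : ζ ω = 0
    · rw [hFdef, Set.piecewise_eq_of_mem {ω' | ζ ω' = 0} _ _ (show ω ∈ {ω' | ζ ω' = 0} from h0)]
      simp only [hRdef, h0, zero_smul, sub_zero]
      rfl
    · rw [hFdef, Set.piecewise_eq_of_notMem {ω' | ζ ω' = 0} _ _ (show ω ∉ {ω' | ζ ω' = 0} from h0)]
      have hcancel : (A + X - ζ ω • (1 : H →L[ℂ] H)) * Rf ω = 1 :=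
        Ring.mul_inverse_cancel _ hu
      have hHR : (A + X) * Rf ω = 1 + ζ ω • Rf ω := by
        have h5 : (A + X) * Rf ω - (ζ ω • (1 : H →L[ℂ] H)) * Rf ω = 1 := by
          rw [← sub_mul]; exact hcancel
        rw [smul_mul_assoc, one_mul] at h5
        rw [← h5]; abel
      have hG : G ω = K ω + ζ ω • (K ω * Rf ω) := by
        have h6 : G ω = K ω * ((A + X) * Rf ω) := rfl
        rw [h6, hHR, mul_add, mul_one, mul_smul_comm]
      have h7 : K ω ∘L Rf ω = K ω * Rf ω := rfl
      rw [h7, hG]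
      rw [add_sub_cancel_left, inv_smul_smul₀ h0]
  have hIntKR : Integrable (fun ω => K ω ∘L Rf ω) μ :=
    Integrable.mono' ((hvInt.const_mul (2 / (1 + v)))) hmeasKR haeKR
  -- the integrand of the second integral
  have hmeas2 : AEStronglyMeasurable (fun ω => (z - ζ ω)⁻¹ • (K ω ∘L Rf ω)) μ :=
    AEStronglyMeasurable.smul ((measurable_const.sub hζ).inv).aestronglyMeasurable hmeasKR
  have hae2 : ∀ᵐ ω ∂μ, ‖(z - ζ ω)⁻¹ • (K ω ∘L Rf ω)‖ ≤
      4 / (d₀ * (1 + v) ^ 2) * (‖K ω‖ / D ω) := by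
    filter_upwards [hae] with ω ⟨hu, hb, hzb, hζb, hd⟩
    have hDp : 0 < D ω := hd₀.trans_le hd
    have hinv : ‖(z - ζ ω)⁻¹‖ ≤ 2 / (D ω * (1 + v)) := by
      rw [norm_inv, show (2:ℝ) / (D ω * (1+v)) = (D ω * (1+v)/2)⁻¹ by rw [inv_div]]
      exact inv_anti₀ (by positivity) hzb
    calc ‖(z - ζ ω)⁻¹ • (K ω ∘L Rf ω)‖ = ‖(z - ζ ω)⁻¹‖ * ‖K ω ∘L Rf ω‖ := norm_smul _ _
      _ ≤ (2 / (D ω * (1 + v))) * (‖K ω‖ * (2 / (D ω * (1 + v)))) := by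
          refine mul_le_mul hinv ?_ (norm_nonneg _) (by positivity)
          exact (opNorm_comp_le _ _).trans (mul_le_mul_of_nonneg_left hb (norm_nonneg _))
      _ ≤ 4 / (d₀ * (1 + v) ^ 2) * (‖K ω‖ / D ω) := arith3 hd₀ hd h1v (norm_nonneg _)
  have hInt2 : Integrable (fun ω => (z - ζ ω)⁻¹ • (K ω ∘L Rf ω)) μ :=
    Integrable.mono' (hvInt.const_mul _) hmeas2 hae2
  -- the combined integrand M
  set M : Ω → H →L[ℂ] H := fun ω => (ζ ω * (z - ζ ω)⁻¹) • (K ω ∘L Rf ω) with hMdef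
  have hmeasM : AEStronglyMeasurable M μ :=
    AEStronglyMeasurable.smul (hζ.mul (measurable_const.sub hζ).inv).aestronglyMeasurable hmeasKR
  have haeM : ∀ᵐ ω ∂μ, ‖M ω‖ ≤
      4 * (d₀ + ‖A‖) / (d₀ * (1 + v) ^ 2) * (‖K ω‖ / D ω) := by
    filter_upwards [hae] with ω ⟨hu, hb, hzb, hζb, hd⟩
    have hDp : 0 < D ω := hd₀.trans_le hd
    have hinv : ‖(z - ζ ω)⁻¹‖ ≤ 2 / (D ω * (1 + v)) := by
      rw [norm_inv, show (2:ℝ) / (D ω * (1+v)) = (D ω * (1+v)/2)⁻¹ by rw [inv_div]]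
      exact inv_anti₀ (by positivity) hzb
    calc ‖M ω‖ = ‖ζ ω‖ * ‖(z - ζ ω)⁻¹‖ * ‖K ω ∘L Rf ω‖ := by
          rw [hMdef]
          simp only []
          rw [norm_smul, norm_mul]
      _ ≤ (D ω + ‖A‖) * (2 / (D ω * (1 + v))) * (‖K ω‖ * (2 / (D ω * (1 + v)))) := by
          refine mul_le_mul (mul_le_mul hζb hinv (norm_nonneg _) (by positivity)) ?_
            (norm_nonneg _) (by positivity)
          exact (opNorm_comp_le _ _).trans (mul_le_mul_of_nonneg_left hb (norm_nonneg _))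
      _ ≤ 4 * (d₀ + ‖A‖) / (d₀ * (1 + v) ^ 2) * (‖K ω‖ / D ω) :=
          arithM hd₀ hd (norm_nonneg _) (norm_nonneg _) hv0
  have hIntM : Integrable M μ := Integrable.mono' (hvInt.const_mul _) hmeasM haeM
  -- W - 1 = ∫ M
  have hWsub : Wfac μ ζ K (A + X) z - 1 = ∫ ω, M ω ∂μ := by
    have e : Wfac μ ζ K (A + X) z = (1 : H →L[ℂ] H) - (∫ ω, K ω ∘L Rf ω ∂μ)
        + z • ∫ ω, (z - ζ ω)⁻¹ • (K ω ∘L Rf ω) ∂μ := rfl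
    rw [e]
    rw [show (1 : H →L[ℂ] H) - (∫ ω, K ω ∘L Rf ω ∂μ)
        + z • (∫ ω, (z - ζ ω)⁻¹ • (K ω ∘L Rf ω) ∂μ) - 1
      = z • (∫ ω, (z - ζ ω)⁻¹ • (K ω ∘L Rf ω) ∂μ) - ∫ ω, K ω ∘L Rf ω ∂μ by abel]
    rw [show z • (∫ ω, (z - ζ ω)⁻¹ • (K ω ∘L Rf ω) ∂μ)
        = ∫ ω, z • ((z - ζ ω)⁻¹ • (K ω ∘L Rf ω)) ∂μ from (integral_smul z _).symm]
    have hInt2' : Integrable (fun ω => z • ((z - ζ ω)⁻¹ • (K ω ∘L Rf ω))) μ := hInt2.smul z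
    rw [← integral_sub hInt2' hIntKR]
    refine integral_congr_ae ?_
    filter_upwards [hae] with ω ⟨hu, hb, hzb, hζb, hd⟩
    have hDp : 0 < D ω := hd₀.trans_le hd
    have hzζ : z - ζ ω ≠ 0 := by
      intro h0
      rw [h0, norm_zero] at hzb
      nlinarith
    have hsc : z * (z - ζ ω)⁻¹ - 1 = ζ ω * (z - ζ ω)⁻¹ := by field_simp; ring
    calc z • ((z - ζ ω)⁻¹ • (K ω ∘L Rf ω)) - K ω ∘L Rf ω
        = (z * (z - ζ ω)⁻¹ - 1) • (K ω ∘L Rf ω) := by rw [smul_smul, sub_smul, one_smul]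
      _ = M ω := by rw [hMdef, hsc]
  -- norm estimate for W - 1
  have hWnorm : ‖Wfac μ ζ K (A + X) z - 1‖ ≤ 4 * v * (d₀ + ‖A‖) / (d₀ * (1 + v) ^ 2) := by
    rw [hWsub]
    refine (norm_integral_le_of_norm_le (hvInt.const_mul _) haeM).trans ?_
    rw [integral_const_mul]
    rw [show ∫ ω, ‖K ω‖ / D ω ∂μ = v from hv.symm]
    ring_nf
    exact le_rfl
  have ht1 : ‖1 - Wfac μ ζ K (A + X) z‖ ≤ 4 * v * (d₀ + ‖A‖) / (d₀ * (1 + v) ^ 2) := by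
    rw [← norm_neg, neg_sub]; exact hWnorm
  have htlt : ‖1 - Wfac μ ζ K (A + X) z‖ < 1 := ht1.trans_lt hq1
  obtain ⟨hu, hbnd⟩ := neumann_bound htlt
  rw [sub_sub_cancel] at hu hbnd
  refine ⟨hu, hbnd.trans (inv_anti₀ (by linarith) (by linarith))⟩
end

section
/- Under the smallness conditions v < 1 and v·‖Ã‖ < d₀(1−v)²/4, let X and X⁻ be the solutions (with norm at most r_min) of the basic equations for the contour datum and its conjugate, H := Ã + X, H⁻ := Ã + X⁻, and define Ω° := ∫ ζ(ω) · (((H⁻)* − ζ(ω))⁻¹ ∘ K(ω) ∘ (H − ζ(ω))⁻¹) dμ(ω). Then the Bochner integral defining Ω° converges, ‖Ω°‖ < 1 (so that I + Ω° is boundedly invertible), and the analogous operator Ω°⁻ built from the conjugate datum (with the roles of the two data interchanged) satisfies Ω°⁻ = (Ω°)*. -/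
open MeasureTheory ContinuousLinearMap

/-- The operator `Ω = ∫ ζ(ω) (Hl - ζ(ω))⁻¹ K(ω) (Hr - ζ(ω))⁻¹ dμ(ω)` of (4.8neu). -/
noncomputable def OmegaOp {H : Type*} [NormedAddCommGroup H] [NormedSpace ℂ H] [CompleteSpace H]
    {Ω : Type*} [MeasurableSpace Ω] (μ : Measure Ω)
    (ζ : Ω → ℂ) (K : Ω → H →L[ℂ] H) (Hl Hr : H →L[ℂ] H) : H →L[ℂ] H :=
  ∫ ω, ζ ω • (Ring.inverse (Hl - ζ ω • (1 : H →L[ℂ] H)) ∘L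
    (K ω ∘L Ring.inverse (Hr - ζ ω • (1 : H →L[ℂ] H)))) ∂μ

/-!
For self-adjoint `Ã` the continuous functional calculus gives `‖(Ã - z)⁻¹‖ ≤ 1 / t` with
`t = dist(z, σ(Ã))`, and a Neumann series turns this into `‖(Ã + W - z)⁻¹‖ ≤ 1 / (t - r)` for
`‖W‖ ≤ r < t`. Since also `|z| ≤ t + ‖Ã‖`, the integrand of `Ω°` is bounded by
`t (t + ‖Ã‖) / (t - r)² · ‖K‖ / t`, and `t ↦ t (t + ‖Ã‖) / (t - r)²` decreases on `t > r`, so the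
integrand is dominated by `c · ‖K‖ / t` with `c = d₀ (d₀ + ‖Ã‖) / (d₀ - r_min)²`. This gives
integrability and `‖Ω°‖ ≤ c v`, and `c v < 1` is the smallness condition `v ‖Ã‖ < d₀ (1 - v)² / 4`
rewritten through the quadratic equation of which `r_min` is a root. Finally, taking adjoints
commutes with the Bochner integral and maps the integrand of `Ω°` to that of `Ω°⁻`.
-/

open Metric

lemma IsUnit.add_and_norm_inverse_add_le {R : Type*} [NormedRing R] [NormOneClass R]
    [CompleteSpace R] {b y : R} (hb : IsUnit b) {m s : ℝ} (hm : ‖Ring.inverse b‖ ≤ m)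
    (hy : ‖y‖ ≤ s) (hms : m * s < 1) :
    IsUnit (b + y) ∧ ‖Ring.inverse (b + y)‖ ≤ m / (1 - m * s) := by
  obtain ⟨u, rfl⟩ := hb
  rw [Ring.inverse_unit] at hm
  set t := -(↑u⁻¹ * y)
  have ht : ‖t‖ ≤ m * s := by
    rw [norm_neg]
    exact (norm_mul_le _ _).trans (mul_le_mul hm hy (norm_nonneg _) ((norm_nonneg _).trans hm))
  have ht1 : ‖t‖ < 1 := ht.trans_lt hms
  have hfactor : (u : R) + y = ↑(u * Units.oneSub t ht1) := by
    simp [t, mul_add, ← mul_assoc]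
  have hgeom : ‖((Units.oneSub t ht1)⁻¹ : Rˣ).val‖ ≤ (1 - m * s)⁻¹ := calc
    _ ≤ ‖(1 : R)‖ - 1 + (1 - ‖t‖)⁻¹ := tsum_geometric_le_of_norm_lt_one t ht1
    _ ≤ (1 - m * s)⁻¹ := by
      rw [norm_one, sub_self, zero_add]
      exact inv_anti₀ (by linarith) (by linarith)
  rw [hfactor]
  refine ⟨Units.isUnit _, ?_⟩
  rw [Ring.inverse_unit, mul_inv_rev, Units.val_mul]
  calc _ ≤ ‖((Units.oneSub t ht1)⁻¹ : Rˣ).val‖ * ‖(↑u⁻¹ : R)‖ := norm_mul_le _ _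
    _ ≤ (1 - m * s)⁻¹ * m := mul_le_mul hgeom hm (norm_nonneg _) (inv_nonneg.2 (by linarith))
    _ = m / (1 - m * s) := by rw [div_eq_inv_mul]

section CStarAlgebra

variable {𝓐 : Type*} [CStarAlgebra 𝓐]

lemma IsStarNormal.norm_inverse_sub_smul_one_le_s15 {a : 𝓐} [IsStarNormal a] {z : ℂ}
    (hz : 0 < infDist z (spectrum ℂ a)) :
    IsUnit (a - z • 1) ∧ ‖Ring.inverse (a - z • 1)‖ ≤ (infDist z (spectrum ℂ a))⁻¹ := by
  have hdist : ∀ x ∈ spectrum ℂ a, infDist z (spectrum ℂ a) ≤ ‖x - z‖ := fun x hx => by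
    rw [← dist_eq_norm, dist_comm]
    exact infDist_le_dist_of_mem hx
  have hne : ∀ x ∈ spectrum ℂ a, x - z ≠ 0 := fun x hx h => by
    have := hdist x hx
    rw [h, norm_zero] at this
    linarith
  have hcfc : a - z • 1 = cfc (fun x : ℂ => x - z) a := by
    rw [cfc_sub (fun x : ℂ => x) (fun _ => z) a, cfc_id' ℂ a, cfc_const z a,
      Algebra.algebraMap_eq_smul_one]
  refine ⟨hcfc ▸ isUnit_cfc _ a (by fun_prop) inferInstance hne, ?_⟩
  rw [hcfc, ← cfc_inv _ a hne]
  refine norm_cfc_le (by positivity) fun x hx => ?_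
  rw [norm_inv]
  exact inv_anti₀ hz (hdist x hx)

lemma IsStarNormal.norm_inverse_add_sub_smul_one_le_s15 {a w : 𝓐} [IsStarNormal a] {z : ℂ} {r : ℝ}
    (hw : ‖w‖ ≤ r) (hr : r < infDist z (spectrum ℂ a)) :
    IsUnit (a + w - z • 1) ∧
      ‖Ring.inverse (a + w - z • 1)‖ ≤ (infDist z (spectrum ℂ a) - r)⁻¹ := by
  have ht : 0 < infDist z (spectrum ℂ a) := ((norm_nonneg w).trans hw).trans_lt hr
  rcases subsingleton_or_nontrivial 𝓐 with _ | _
  · simp [spectrum.of_subsingleton] at ht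
  obtain ⟨hunit, hnorm⟩ := IsStarNormal.norm_inverse_sub_smul_one_le_s15 ht
  have hrt : (infDist z (spectrum ℂ a))⁻¹ * r < 1 := by rwa [← div_eq_inv_mul, div_lt_one ht]
  rw [add_sub_right_comm]
  refine (hunit.add_and_norm_inverse_add_le hnorm hw hrt).imp_right fun h => h.trans_eq ?_
  field_simp

lemma norm_le_infDist_spectrum_add_norm (a : 𝓐) {z : ℂ} (hz : 0 < infDist z (spectrum ℂ a)) :
    ‖z‖ ≤ infDist z (spectrum ℂ a) + ‖a‖ := by
  rcases subsingleton_or_nontrivial 𝓐 with _ | _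
  · simp [spectrum.of_subsingleton] at hz
  rw [← sub_le_iff_le_add]
  refine (le_infDist (spectrum.nonempty a)).2 fun x hx => ?_
  rw [dist_eq_norm]
  linarith [norm_sub_norm_le z x, spectrum.norm_le_norm_of_mem hx]

end CStarAlgebra

/-- The smaller root of `r ^ 2 - d₀ * (1 - v) * r + d₀ * v * a = 0`. -/
noncomputable def rMin (d₀ v a : ℝ) : ℝ :=
  d₀ * (1 - v) / 2 - Real.sqrt (d₀ ^ 2 * (1 - v) ^ 2 / 4 - d₀ * v * a)

section rMin

variable {d₀ v a : ℝ}

lemma rMin_lt (hd₀ : 0 < d₀) (hv : 0 ≤ v) : rMin d₀ v a < d₀ := by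
  have := Real.sqrt_nonneg (d₀ ^ 2 * (1 - v) ^ 2 / 4 - d₀ * v * a)
  unfold rMin
  nlinarith

lemma mul_div_sub_rMin_sq_lt_one (hd₀ : 0 < d₀) (hv : 0 ≤ v)
    (hva : v * a < d₀ * (1 - v) ^ 2 / 4) :
    d₀ * (d₀ + a) / (d₀ - rMin d₀ v a) ^ 2 * v < 1 := by
  have hdisc : 0 ≤ d₀ ^ 2 * (1 - v) ^ 2 / 4 - d₀ * v * a := by nlinarith
  have hroot : rMin d₀ v a ^ 2 = d₀ * (1 - v) * rMin d₀ v a - d₀ * v * a := by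
    unfold rMin
    nlinarith [Real.sq_sqrt hdisc]
  have hle : rMin d₀ v a ≤ d₀ * (1 - v) / 2 :=
    sub_le_self _ (Real.sqrt_nonneg _)
  have hpos : 0 < d₀ - rMin d₀ v a := sub_pos.2 (rMin_lt hd₀ hv)
  rw [div_mul_eq_mul_div, div_lt_one (by positivity)]
  -- by `hroot`, `(d₀ - r) ^ 2 - v * d₀ * (d₀ + a) = d₀ * ((1 - v) * d₀ - (1 + v) * r - 2 * v * a)`
  nlinarith [mul_le_mul_of_nonneg_left hle (by positivity : 0 ≤ d₀ * (1 + v))]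

end rMin

lemma mul_add_div_sub_sq_le {r d t a : ℝ} (hr : 0 ≤ r) (hrd : r < d) (hdt : d ≤ t) (ha : 0 ≤ a) :
    t * (t + a) / (t - r) ^ 2 ≤ d * (d + a) / (d - r) ^ 2 := by
  have hmono : ∀ b, 0 ≤ b → (t + b) / (t - r) ≤ (d + b) / (d - r) := fun b hb => by
    rw [div_le_div_iff₀ (by linarith) (by linarith)]
    nlinarith
  have h := mul_le_mul (by simpa using hmono 0 le_rfl) (hmono a ha)
    (div_nonneg (by linarith) (by linarith)) (div_nonneg (by linarith) (by linarith))
  rwa [div_mul_div_comm, div_mul_div_comm, ← sq, ← sq] at h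

lemma Measurable.aestronglyMeasurable_inverse_comp {Ω E R : Type*} [MeasurableSpace Ω]
    {μ : Measure Ω} [TopologicalSpace E] [SecondCountableTopology E] [MeasurableSpace E]
    [OpensMeasurableSpace E] [NormedRing R] [CompleteSpace R] {f : E → R} (hf : Continuous f)
    {g : Ω → E} (hg : Measurable g) :
    AEStronglyMeasurable (fun ω => Ring.inverse (f (g ω))) μ := by
  suffices AEStronglyMeasurable (fun e => Ring.inverse (f e)) (μ.map g) from
    this.comp_aemeasurable hg.aemeasurable
  set U := f ⁻¹' {x | IsUnit x}
  have hU : IsOpen U := Units.isOpen.preimage hf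
  have hcont : ContinuousOn (fun e => Ring.inverse (f e)) U := fun e he =>
    ((he.unit_spec ▸ NormedRing.inverse_continuousAt he.unit).comp
      hf.continuousAt).continuousWithinAt
  rw [← Measure.restrict_univ (μ := μ.map g), ← Set.union_compl_self U,
    aestronglyMeasurable_union_iff]
  refine ⟨hcont.aestronglyMeasurable hU.measurableSet,
    (aestronglyMeasurable_const (b := (0 : R))).congr ?_⟩
  exact ae_restrict_of_forall_mem hU.measurableSet.compl fun e he =>
    (Ring.inverse_non_unit _ he).symm

section OmegaOp

variable {H : Type*} [NormedAddCommGroup H] [InnerProductSpace ℂ H] [CompleteSpace H]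
  {Ω : Type*} [MeasurableSpace Ω] {μ : Measure Ω}

noncomputable def omegaIntegrand (Hl Hr k : H →L[ℂ] H) (z : ℂ) : H →L[ℂ] H :=
  z • (Ring.inverse (Hl - z • (1 : H →L[ℂ] H)) ∘L (k ∘L Ring.inverse (Hr - z • (1 : H →L[ℂ] H))))

lemma OmegaOp_eq_integral_omegaIntegrand (ζ : Ω → ℂ) (K : Ω → H →L[ℂ] H) (Hl Hr : H →L[ℂ] H) :
    OmegaOp μ ζ K Hl Hr = ∫ ω, omegaIntegrand Hl Hr (K ω) (ζ ω) ∂μ :=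
  rfl

lemma star_omegaIntegrand (Hl Hr k : H →L[ℂ] H) (z : ℂ) :
    star (omegaIntegrand Hl Hr k z) =
      omegaIntegrand (star Hr) (star Hl) (star k) (starRingEnd ℂ z) := by
  simp only [omegaIntegrand, ← ContinuousLinearMap.mul_def, star_smul, star_mul,
    ← Ring.inverse_star, star_sub, star_one, mul_assoc, starRingEnd_apply]

lemma adjoint_OmegaOp (ζ : Ω → ℂ) (K : Ω → H →L[ℂ] H) (Hl Hr : H →L[ℂ] H) :
    adjoint (OmegaOp μ ζ K Hl Hr) =
      OmegaOp μ (fun ω => starRingEnd ℂ (ζ ω)) (fun ω => adjoint (K ω))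
        (adjoint Hr) (adjoint Hl) := by
  simp only [OmegaOp_eq_integral_omegaIntegrand, ← star_eq_adjoint, ← star_omegaIntegrand]
  exact ((starL' ℝ).integral_comp_comm _).symm

lemma aestronglyMeasurable_omegaIntegrand (Hl Hr : H →L[ℂ] H) {ζ : Ω → ℂ} (hζ : Measurable ζ)
    {K : Ω → H →L[ℂ] H} (hK : AEStronglyMeasurable K μ) :
    AEStronglyMeasurable (fun ω => omegaIntegrand Hl Hr (K ω) (ζ ω)) μ := by
  have hres : ∀ B : H →L[ℂ] H,
      AEStronglyMeasurable (fun ω => Ring.inverse (B - ζ ω • (1 : H →L[ℂ] H))) μ := fun B =>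
    hζ.aestronglyMeasurable_inverse_comp (f := fun z : ℂ => B - z • 1) (by fun_prop)
  simp only [omegaIntegrand, ← ContinuousLinearMap.mul_def]
  exact hζ.aestronglyMeasurable.smul ((hres Hl).mul (hK.mul (hres Hr)))

lemma norm_omegaIntegrand_le {A W₁ W₂ : H →L[ℂ] H} (hA : IsSelfAdjoint A) (k : H →L[ℂ] H)
    {z : ℂ} {r d : ℝ} (hW₁ : ‖W₁‖ ≤ r) (hW₂ : ‖W₂‖ ≤ r) (hrd : r < d)
    (hd : d ≤ infDist z (spectrum ℂ A)) :
    ‖omegaIntegrand (A + W₁) (A + W₂) k z‖ ≤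
      d * (d + ‖A‖) / (d - r) ^ 2 * (‖k‖ / infDist z (spectrum ℂ A)) := by
  have : IsStarNormal A := hA.isStarNormal
  set t := infDist z (spectrum ℂ A)
  have hr : 0 ≤ r := (norm_nonneg _).trans hW₁
  have hrt : r < t := hrd.trans_le hd
  have ht : 0 < t := hr.trans_lt hrt
  have hz : ‖z‖ ≤ t + ‖A‖ := norm_le_infDist_spectrum_add_norm A ht
  have h₁ := (IsStarNormal.norm_inverse_add_sub_smul_one_le_s15 hW₁ hrt).2
  have h₂ := (IsStarNormal.norm_inverse_add_sub_smul_one_le_s15 hW₂ hrt).2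
  calc ‖omegaIntegrand (A + W₁) (A + W₂) k z‖
      ≤ ‖z‖ * ((t - r)⁻¹ * (‖k‖ * (t - r)⁻¹)) := by
        rw [omegaIntegrand, norm_smul]
        gcongr
        refine (opNorm_comp_le _ _).trans (mul_le_mul h₁ ?_ (norm_nonneg _) (by positivity))
        exact (opNorm_comp_le _ _).trans (by gcongr)
    _ = ‖z‖ * ‖k‖ / (t - r) ^ 2 := by rw [div_eq_mul_inv, ← inv_pow]; ring
    _ ≤ (t + ‖A‖) * ‖k‖ / (t - r) ^ 2 := by gcongr
    _ = t * (t + ‖A‖) / (t - r) ^ 2 * (‖k‖ / t) := by field_simp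
    _ ≤ d * (d + ‖A‖) / (d - r) ^ 2 * (‖k‖ / t) :=
        mul_le_mul_of_nonneg_right (mul_add_div_sub_sq_le hr hrd hd (norm_nonneg A))
          (by positivity)

end OmegaOp

theorem OmegaOp_properties_general
    {H : Type*} [NormedAddCommGroup H] [InnerProductSpace ℂ H] [CompleteSpace H]
    {Ω : Type*} [MeasurableSpace Ω] (μ : Measure Ω)
    (ζ : Ω → ℂ) (hζ : Measurable ζ)
    (K : Ω → H →L[ℂ] H) (hK : Integrable K μ)
    (A : H →L[ℂ] H) (hA : IsSelfAdjoint A)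
    (d₀ : ℝ) (hd₀ : 0 < d₀)
    (hdist : ∀ᵐ ω ∂μ, d₀ ≤ Metric.infDist (ζ ω) (spectrum ℂ A))
    (hvInt : Integrable (fun ω => ‖K ω‖ / Metric.infDist (ζ ω) (spectrum ℂ A)) μ)
    (v : ℝ) (hv : v = ∫ ω, ‖K ω‖ / Metric.infDist (ζ ω) (spectrum ℂ A) ∂μ)
    (hv2 : v * ‖A‖ < d₀ * (1 - v) ^ 2 / 4)
    (X X' : H →L[ℂ] H)
    (hXnorm : ‖X‖ ≤ d₀ * (1 - v) / 2 -
      Real.sqrt (d₀ ^ 2 * (1 - v) ^ 2 / 4 - d₀ * v * ‖A‖))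
    (hX'norm : ‖X'‖ ≤ d₀ * (1 - v) / 2 -
      Real.sqrt (d₀ ^ 2 * (1 - v) ^ 2 / 4 - d₀ * v * ‖A‖)) :
    Integrable (fun ω => ζ ω •
      (Ring.inverse (ContinuousLinearMap.adjoint (A + X') - ζ ω • (1 : H →L[ℂ] H)) ∘L
        (K ω ∘L Ring.inverse (A + X - ζ ω • (1 : H →L[ℂ] H))))) μ ∧
    ‖OmegaOp μ ζ K (ContinuousLinearMap.adjoint (A + X')) (A + X)‖ < 1 ∧
    IsUnit ((1 : H →L[ℂ] H) + OmegaOp μ ζ K (ContinuousLinearMap.adjoint (A + X')) (A + X)) ∧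
    OmegaOp μ (fun ω => (starRingEnd ℂ) (ζ ω))
        (fun ω => ContinuousLinearMap.adjoint (K ω))
        (ContinuousLinearMap.adjoint (A + X)) (A + X') =
      ContinuousLinearMap.adjoint
        (OmegaOp μ ζ K (ContinuousLinearMap.adjoint (A + X')) (A + X)) := by
  have hv0 : 0 ≤ v := hv ▸ integral_nonneg fun ω => div_nonneg (norm_nonneg _) infDist_nonneg
  set c := d₀ * (d₀ + ‖A‖) / (d₀ - rMin d₀ v ‖A‖) ^ 2
  have hX'adj : ‖adjoint X'‖ ≤ rMin d₀ v ‖A‖ := by rwa [LinearIsometryEquiv.norm_map]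
  have hbound : ∀ᵐ ω ∂μ, ‖omegaIntegrand (adjoint (A + X')) (A + X) (K ω) (ζ ω)‖ ≤
      c * (‖K ω‖ / infDist (ζ ω) (spectrum ℂ A)) := hdist.mono fun ω hω => by
    rw [map_add, hA.adjoint_eq]
    exact norm_omegaIntegrand_le hA _ hX'adj hXnorm (rMin_lt hd₀ hv0) hω
  have hInt : Integrable (fun ω => omegaIntegrand (adjoint (A + X')) (A + X) (K ω) (ζ ω)) μ :=
    (hvInt.const_mul c).mono' (aestronglyMeasurable_omegaIntegrand _ _ hζ hK.1) hbound
  have hnorm : ‖OmegaOp μ ζ K (adjoint (A + X')) (A + X)‖ < 1 := calc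
    _ ≤ ∫ ω, c * (‖K ω‖ / infDist (ζ ω) (spectrum ℂ A)) ∂μ :=
      norm_integral_le_of_norm_le (hvInt.const_mul c) hbound
    _ = c * v := by rw [integral_const_mul, hv]
    _ < 1 := mul_div_sub_rMin_sq_lt_one hd₀ hv0 hv2
  refine ⟨hInt, hnorm, ?_, by rw [adjoint_OmegaOp, adjoint_adjoint]⟩
  simpa using isUnit_one_sub_of_norm_lt_one (x := -OmegaOp μ ζ K (adjoint (A + X')) (A + X))
    (by rwa [norm_neg])

/-- Properties (4.9) of Theorem `MHOmega`: the Bochner integral defining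
`Ω° = ∫ ζ(ω) ((H⁻)* - ζ(ω))⁻¹ K(ω) (H - ζ(ω))⁻¹ dμ(ω)` converges, `‖Ω°‖ < 1`
(hence `I + Ω°` is boundedly invertible), and the analogous operator `Ω°⁻` of the
conjugate datum satisfies `Ω°⁻ = (Ω°)*`. -/
theorem OmegaOp_properties
    {H : Type*} [NormedAddCommGroup H] [InnerProductSpace ℂ H] [CompleteSpace H]
    {Ω : Type*} [MeasurableSpace Ω] (μ : Measure Ω)
    (ζ : Ω → ℂ) (hζ : Measurable ζ)
    (K : Ω → H →L[ℂ] H) (hK : Integrable K μ)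
    (A : H →L[ℂ] H) (hA : IsSelfAdjoint A)
    (d₀ : ℝ) (hd₀ : 0 < d₀)
    (hdist : ∀ᵐ ω ∂μ, d₀ ≤ Metric.infDist (ζ ω) (spectrum ℂ A))
    (hvInt : Integrable (fun ω => ‖K ω‖ / Metric.infDist (ζ ω) (spectrum ℂ A)) μ)
    (v : ℝ) (hv : v = ∫ ω, ‖K ω‖ / Metric.infDist (ζ ω) (spectrum ℂ A) ∂μ)
    (hv1 : v < 1) (hv2 : v * ‖A‖ < d₀ * (1 - v) ^ 2 / 4)
    (X X' : H →L[ℂ] H)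
    (hXnorm : ‖X‖ ≤ d₀ * (1 - v) / 2 -
      Real.sqrt (d₀ ^ 2 * (1 - v) ^ 2 / 4 - d₀ * v * ‖A‖))
    (hXsol : IsSolution μ ζ K A X)
    (hX'norm : ‖X'‖ ≤ d₀ * (1 - v) / 2 -
      Real.sqrt (d₀ ^ 2 * (1 - v) ^ 2 / 4 - d₀ * v * ‖A‖))
    (hX'sol : IsSolution μ (fun ω => (starRingEnd ℂ) (ζ ω))
      (fun ω => ContinuousLinearMap.adjoint (K ω)) A X') :
    Integrable (fun ω => ζ ω •
      (Ring.inverse (ContinuousLinearMap.adjoint (A + X') - ζ ω • (1 : H →L[ℂ] H)) ∘L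
        (K ω ∘L Ring.inverse (A + X - ζ ω • (1 : H →L[ℂ] H))))) μ ∧
    ‖OmegaOp μ ζ K (ContinuousLinearMap.adjoint (A + X')) (A + X)‖ < 1 ∧
    IsUnit ((1 : H →L[ℂ] H) + OmegaOp μ ζ K (ContinuousLinearMap.adjoint (A + X')) (A + X)) ∧
    OmegaOp μ (fun ω => (starRingEnd ℂ) (ζ ω))
        (fun ω => ContinuousLinearMap.adjoint (K ω))
        (ContinuousLinearMap.adjoint (A + X)) (A + X') =
      ContinuousLinearMap.adjoint
        (OmegaOp μ ζ K (ContinuousLinearMap.adjoint (A + X')) (A + X)) :=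
  OmegaOp_properties_general μ ζ hζ K hK A hA d₀ hd₀ hdist hvInt v hv hv2 X X' hXnorm hX'norm
end
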